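/- arXiv:2006.04690 — 10 statements merged into one kernel-verified Lean document; each statement's English description precedes it below -/
import Mathlib

section
/- Let F be a field equipped with a star operation (a star-ring), let N ≥ 1, let G be an N×N matrix over F with zero diagonal (G i i = 0 for all i), and let d : Fin N → F be a family of nonzero entries with D the diagonal matrix with entries d. Define K = (I − G)ᴴ · D⁻¹ · (I − G), where ᴴ denotes conjugate transpose. Then for all i ≠ j, if K i j ≠ 0 then i and j are kins with respect to G, i.e., G i j ≠ 0, or G j i ≠ 0, or there exists k with G k i ≠ 0 and G k j ≠ 0. (This is the matrix-algebra content of Corollary 1: the inverse power spectrum (I−𝒢)*Φ_e⁻¹(I−𝒢) of a dynamic influence model has nonzero off-diagonal entries only at kin pairs.) -/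
open Matrix

/-- Over a star-ring field `F`, for a dynamic influence model matrix `G`
with zero diagonal and a diagonal noise spectrum `D = diagonal d` with nonzero entries,
the matrix `K = (I - G)ᴴ * D⁻¹ * (I - G)` has nonzero off-diagonal entries only at
kin pairs: `G i j ≠ 0`, or `G j i ≠ 0`, or there exists a common child `k` with
`G k i ≠ 0` and `G k j ≠ 0`. -/
theorem stmt0 {F : Type*} [Field F] [StarRing F] (N : ℕ) (hN : 1 ≤ N)
    (G : Matrix (Fin N) (Fin N) F) (hG : ∀ i, G i i = 0)
    (d : Fin N → F) (hd : ∀ i, d i ≠ 0)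
    (K : Matrix (Fin N) (Fin N) F)
    (hK : K = (1 - G)ᴴ * (Matrix.diagonal d)⁻¹ * (1 - G)) :
    ∀ i j : Fin N, i ≠ j → K i j ≠ 0 →
      (G i j ≠ 0 ∨ G j i ≠ 0 ∨ ∃ k, G k i ≠ 0 ∧ G k j ≠ 0) := by
  intro i j hij hK0
  by_contra h
  push_neg at h
  obtain ⟨h1, h2, h3⟩ := h
  apply hK0
  subst hK
  rw [Matrix.inv_diagonal]
  rw [Matrix.mul_apply]
  apply Finset.sum_eq_zero
  intro k _
  rw [Matrix.mul_diagonal, Matrix.conjTranspose_apply]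
  simp only [Matrix.sub_apply, Matrix.one_apply]
  by_cases hki : k = i
  · subst hki
    simp [hij, hG k, h1]
  · by_cases hkj : k = j
    · subst hkj
      simp [Ne.symm hij, hki, hG k, h2]
    · by_cases hl : G k i = 0
      · simp [hki, hkj, hl]
      · simp [hki, hkj, h3 k hl]
end

section
/- Let F be a field, N ≥ 1, and let Gm be a simple graph on Fin N (the moral graph). Let Φ be an invertible N×N matrix over F such that for all p ≠ q, (Φ⁻¹) p q ≠ 0 implies p and q are adjacent in Gm. Let H be a diagonal matrix with nonzero diagonal entries, let H' be another diagonal matrix with nonzero diagonal entries, let Z ⊆ Fin N be a finite set of perturbed nodes, and let θ : Fin N → F with θ v = 0 for v ∉ Z. Suppose Ψ = H·Φ·H' + Σ_{v ∈ Z} θ v • (E_{vv}) is invertible, where E_{vv} is the matrix with a single 1 in entry (v,v) and zeros elsewhere. Then for all p ≠ q, (Ψ⁻¹) p q ≠ 0 implies that p and q are adjacent in the perturbed graph Gm_Z, i.e., there exists a walk in Gm from p to q all of whose intermediate vertices lie in Z. (This is the matrix-algebra content of Theorem 3: the inverse power spectrum of corrupted data streams has nonzero off-diagonal entries only at neighbor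 pairs of the perturbed moral graph.) -/
/-!
Write `Ψ = B + U V`, where `B = H Φ H'` and `U V = ∑_{v ∈ Z} θ v • E_vv` factors through the
coordinates indexed by `Z`. By the Woodbury identity, `Ψ⁻¹ = B⁻¹ - B⁻¹ U L⁻¹ V B⁻¹` with
`L = 1 + V B⁻¹ U` indexed by `Z`. Off the diagonal, `L` is supported on edges of `Gm` inside `Z`,
and the inverse of a matrix is block diagonal along the connected components of its support
(it commutes with the projections onto them), so `L⁻¹ z z' ≠ 0` only if `z` and `z'` are joined
inside `Z`. Hence a nonzero entry `Ψ⁻¹ p q` comes from an edge `p q` or a walk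
`p – z ⋯ z' – q` with `z, …, z'` in `Z`.
-/

open Matrix

def PerturbedAdj {V : Type*} (G : SimpleGraph V) (Z : Set V) (p q : V) : Prop :=
  p ≠ q ∧ ∃ w : G.Walk p q, ∀ v ∈ w.support, v ≠ p → v ≠ q → v ∈ Z

namespace SimpleGraph

variable {V : Type*} {G : SimpleGraph V} {Z : Set V} {a b c : V}

variable (G Z) in
def ReachableVia (a b : V) : Prop :=
  ∃ w : G.Walk a b, ∀ v ∈ w.support, v ≠ a → v ≠ b → v ∈ Z

theorem ReachableVia.refl (a : V) : G.ReachableVia Z a a :=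
  ⟨.nil, fun v hv hva _ => (hva (by simpa using hv)).elim⟩

theorem Adj.reachableVia (h : G.Adj a b) : G.ReachableVia Z a b :=
  ⟨h.toWalk, fun v hv hva hvb => by simp_all⟩

theorem ReachableVia.symm (h : G.ReachableVia Z a b) : G.ReachableVia Z b a :=
  let ⟨w, hw⟩ := h
  ⟨w.reverse, fun v hv hvb hva => hw v (by simpa using hv) hva hvb⟩

theorem ReachableVia.trans (hab : G.ReachableVia Z a b) (hb : b ∈ Z)
    (hbc : G.ReachableVia Z b c) : G.ReachableVia Z a c := by
  obtain ⟨w₁, h₁⟩ := hab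
  obtain ⟨w₂, h₂⟩ := hbc
  refine ⟨w₁.append w₂, fun v hv hva hvc => ?_⟩
  by_cases hvb : v = b
  · exact hvb ▸ hb
  rcases (w₁.mem_support_append_iff w₂).mp hv with hv | hv
  · exact h₁ v hv hva hvb
  · exact h₂ v hv hvb hvc

theorem equivalence_reachableVia : Equivalence fun a b : Z => G.ReachableVia Z a b :=
  ⟨fun a => ReachableVia.refl (a : V), ReachableVia.symm,
    fun hab hbc => hab.trans (Subtype.prop _) hbc⟩

end SimpleGraph

theorem Commute.nonsing_inv_left {n R : Type*} [Fintype n] [DecidableEq n] [CommRing R]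
    {A B : Matrix n n R} (h : Commute A B) : Commute A⁻¹ B := by
  rw [nonsing_inv_eq_ringInverse]
  by_cases hA : IsUnit A
  · obtain ⟨u, rfl⟩ := hA
    rw [Ring.inverse_unit]
    exact h.units_inv_left
  · rw [Ring.inverse_non_unit _ hA]
    exact Commute.zero_left B

namespace Matrix

theorem exists_ne_zero_of_mul_apply_ne_zero {l m o R : Type*} [Fintype m]
    [NonUnitalNonAssocSemiring R] {A : Matrix l m R} {B : Matrix m o R} {i : l} {j : o}
    (h : (A * B) i j ≠ 0) : ∃ k, A i k ≠ 0 ∧ B k j ≠ 0 :=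
  let ⟨k, _, hk⟩ := Finset.exists_ne_zero_of_sum_ne_zero h
  ⟨k, left_ne_zero_of_mul hk, right_ne_zero_of_mul hk⟩

variable {n R : Type*} [DecidableEq n] [CommRing R]

theorem eqvGen_of_nonsing_inv_apply_ne_zero [Fintype n] {L : Matrix n n R} {i j : n}
    (h : L⁻¹ i j ≠ 0) : Relation.EqvGen (fun a b => L a b ≠ 0) i j := by
  classical
  by_contra hij
  -- `L` commutes with the projection onto the class of `j`, hence so does `L⁻¹`.
  let P : Matrix n n R :=
    diagonal fun a => if Relation.EqvGen (fun a b => L a b ≠ 0) a j then 1 else 0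
  have hLP : Commute L P := by
    ext a b
    simp only [P, mul_diagonal, diagonal_mul]
    by_cases hab : L a b = 0
    · simp [hab]
    · have hclass : Relation.EqvGen (fun a b => L a b ≠ 0) a j ↔
          Relation.EqvGen (fun a b => L a b ≠ 0) b j :=
        ⟨fun haj => (Relation.EqvGen.rel _ _ hab).symm.trans _ _ _ haj,
          fun hbj => (Relation.EqvGen.rel _ _ hab).trans _ _ _ hbj⟩
      rw [hclass, mul_comm]
  have hij_entry := congr_fun (congr_fun hLP.nonsing_inv_left.eq i) j
  simp [P, mul_diagonal, diagonal_mul, hij, Relation.EqvGen.refl] at hij_entry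
  exact h hij_entry

theorem sum_smul_single_eq_mul (Z : Finset n) (θ : n → R) :
    ∑ v ∈ Z, θ v • single v v (1 : R) =
      (1 : Matrix n n R).submatrix id ((↑) : Z → n) * (diagonal θ).submatrix ((↑) : Z → n) id := by
  ext a b
  rw [Matrix.mul_apply, Matrix.sum_apply, ← Finset.sum_coe_sort Z]
  refine Finset.sum_congr rfl fun z _ => ?_
  by_cases ha : (z : n) = a <;> by_cases hb : (z : n) = b <;>
    simp [single_apply, one_apply, diagonal_apply, ha, hb, eq_comm]

theorem mul_one_submatrix_apply {l m : Type*} [Fintype n] (X : Matrix l n R) (e : m → n)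
    (i : l) (j : m) : (X * (1 : Matrix n n R).submatrix id e) i j = X i (e j) := by
  simp [mul_apply, one_apply]

theorem diagonal_submatrix_mul_apply {l m : Type*} [Fintype n] (θ : n → R) (e : m → n)
    (X : Matrix n l R) (i : m) (j : l) :
    ((diagonal θ).submatrix e id * X) i j = θ (e i) * X (e i) j := by
  simp [mul_apply, diagonal_apply]

theorem nonsing_inv_diagonal_mul_mul_diagonal_apply [Fintype n] (h h' : n → R)
    (A : Matrix n n R) (i j : n) :
    (diagonal h * A * diagonal h')⁻¹ i j = Ring.inverse h' i * A⁻¹ i j * Ring.inverse h j := by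
  rw [mul_inv_rev, mul_inv_rev, inv_diagonal, inv_diagonal, ← Matrix.mul_assoc, mul_diagonal,
    diagonal_mul]

end Matrix

namespace SimpleGraph

variable {n R : Type*} [DecidableEq n] [CommRing R] {G : SimpleGraph n}

theorem reachableVia_of_apply_ne_zero {Z : Set n} {X : Matrix n n R}
    (hX : ∀ p q, p ≠ q → X p q ≠ 0 → G.Adj p q) {p q : n} (h : X p q ≠ 0) :
    G.ReachableVia Z p q := by
  by_cases hpq : p = q
  · exact hpq ▸ .refl p
  · exact (hX p q hpq h).reachableVia

theorem reachableVia_of_inv_add_sum_single_apply_ne_zero [Fintype n] {B : Matrix n n R}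
    (hB : IsUnit B.det) (hBG : ∀ p q, p ≠ q → B⁻¹ p q ≠ 0 → G.Adj p q)
    (Z : Finset n) (θ : n → R) (hΨ : IsUnit (B + ∑ v ∈ Z, θ v • single v v (1 : R)).det)
    {p q : n} (h : (B + ∑ v ∈ Z, θ v • single v v (1 : R))⁻¹ p q ≠ 0) :
    G.ReachableVia Z p q := by
  set U := (1 : Matrix n n R).submatrix id ((↑) : Z → n)
  set V := (diagonal θ).submatrix ((↑) : Z → n) id
  have hsum : ∑ v ∈ Z, θ v • single v v (1 : R) = U * (1 : Matrix Z Z R) * V := by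
    rw [Matrix.mul_one]
    exact sum_smul_single_eq_mul Z θ
  have hBZ {a b : n} : B⁻¹ a b ≠ 0 → G.ReachableVia Z a b := reachableVia_of_apply_ne_zero hBG
  set L := 1 + V * B⁻¹ * U with hL_def
  have hLZ (z z' : Z) (hz : L⁻¹ z z' ≠ 0) : G.ReachableVia Z z z' := by
    refine equivalence_reachableVia.eqvGen_iff.mp
      ((eqvGen_of_nonsing_inv_apply_ne_zero hz).mono fun a b hab => ?_)
    by_cases hab' : a = b
    · exact hab' ▸ .refl _
    rw [hL_def, Matrix.add_apply, one_apply_ne hab', zero_add, mul_one_submatrix_apply,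
      diagonal_submatrix_mul_apply] at hab
    exact hBZ (right_ne_zero_of_mul hab)
  have hL : IsUnit L := by
    rw [isUnit_iff_isUnit_det]
    rw [hsum, Matrix.mul_one, det_add_mul U V hB] at hΨ
    exact isUnit_of_mul_isUnit_right hΨ
  have hinv : (B + ∑ v ∈ Z, θ v • single v v (1 : R))⁻¹ = B⁻¹ - B⁻¹ * U * L⁻¹ * V * B⁻¹ := by
    rw [hsum, add_mul_mul_inv_eq_sub _ _ _ _ ((isUnit_iff_isUnit_det B).mpr hB) isUnit_one
      (by rwa [inv_one]), inv_one]
  rw [hinv, Matrix.sub_apply] at h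
  by_cases hpq : B⁻¹ p q = 0
  · rw [hpq, zero_sub, neg_ne_zero, Matrix.mul_assoc (B⁻¹ * U * L⁻¹)] at h
    obtain ⟨z', hpz', hz'q⟩ := exists_ne_zero_of_mul_apply_ne_zero h
    obtain ⟨z, hpz, hzz'⟩ := exists_ne_zero_of_mul_apply_ne_zero hpz'
    rw [mul_one_submatrix_apply] at hpz
    rw [diagonal_submatrix_mul_apply] at hz'q
    exact ((hBZ hpz).trans z.2 (hLZ z z' hzz')).trans z'.2 (hBZ (right_ne_zero_of_mul hz'q))
  · exact hBZ hpq

end SimpleGraph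

theorem stmt2_general {F : Type*} [Field F] (N : ℕ)
    (Gm : SimpleGraph (Fin N))
    (Φ : Matrix (Fin N) (Fin N) F) (hΦ : IsUnit Φ.det)
    (hmoral : ∀ p q : Fin N, p ≠ q → Φ⁻¹ p q ≠ 0 → Gm.Adj p q)
    (h h' : Fin N → F) (hh : ∀ i, h i ≠ 0) (hh' : ∀ i, h' i ≠ 0)
    (H H' : Matrix (Fin N) (Fin N) F)
    (hH : H = Matrix.diagonal h) (hH' : H' = Matrix.diagonal h')
    (Z : Finset (Fin N)) (θ : Fin N → F)
    (Ψ : Matrix (Fin N) (Fin N) F)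
    (hΨ : Ψ = H * Φ * H' + ∑ v ∈ Z, θ v • Matrix.single v v 1)
    (hΨu : IsUnit Ψ.det) :
    ∀ p q : Fin N, p ≠ q → Ψ⁻¹ p q ≠ 0 → PerturbedAdj Gm (↑Z) p q := by
  intro p q hpq hΨpq
  subst hΨ hH hH'
  have hdiag {d : Fin N → F} (hd : ∀ i, d i ≠ 0) : IsUnit (diagonal d).det := by
    rw [det_diagonal, isUnit_iff_ne_zero]
    exact Finset.prod_ne_zero_iff.mpr fun i _ => hd i
  have hB : IsUnit (diagonal h * Φ * diagonal h').det := by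
    rw [det_mul, det_mul]
    exact ((hdiag hh).mul hΦ).mul (hdiag hh')
  refine ⟨hpq, SimpleGraph.reachableVia_of_inv_add_sum_single_apply_ne_zero hB
    (fun a b hab hBab => hmoral a b hab ?_) Z θ hΨu hΨpq⟩
  rw [nonsing_inv_diagonal_mul_mul_diagonal_apply] at hBab
  exact right_ne_zero_of_mul (left_ne_zero_of_mul hBab)

/-- matrix-algebra content of Theorem 3: if the inverse of `Φ` has its
nonzero off-diagonal entries only at edges of a moral graph `Gm`, then the inverse of
the corrupted spectrum `Ψ = H·Φ·H' + Σ_{v∈Z} θ v • E_{vv}` has its nonzero off-diagonal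
entries only at neighbor pairs of the perturbed graph `Gm_Z`. -/
theorem stmt2 {F : Type*} [Field F] (N : ℕ) (hN : 1 ≤ N)
    (Gm : SimpleGraph (Fin N))
    (Φ : Matrix (Fin N) (Fin N) F) (hΦ : IsUnit Φ.det)
    (hmoral : ∀ p q : Fin N, p ≠ q → Φ⁻¹ p q ≠ 0 → Gm.Adj p q)
    (h h' : Fin N → F) (hh : ∀ i, h i ≠ 0) (hh' : ∀ i, h' i ≠ 0)
    (H H' : Matrix (Fin N) (Fin N) F)
    (hH : H = Matrix.diagonal h) (hH' : H' = Matrix.diagonal h')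
    (Z : Finset (Fin N)) (θ : Fin N → F) (hθ : ∀ v ∉ Z, θ v = 0)
    (Ψ : Matrix (Fin N) (Fin N) F)
    (hΨ : Ψ = H * Φ * H' + ∑ v ∈ Z, θ v • Matrix.single v v 1)
    (hΨu : IsUnit Ψ.det) :
    ∀ p q : Fin N, p ≠ q → Ψ⁻¹ p q ≠ 0 → PerturbedAdj Gm (↑Z) p q :=
  stmt2_general N Gm Φ hΦ hmoral h h' hh hh' H H' hH hH' Z θ Ψ hΨ hΨu
end

section
/- Let G be a simple graph on a finite vertex set V, let Z ⊆ V, and let p, q, v be distinct vertices with v ∈ V. If {p,v} and {v,q} are both edges of the perturbed graph G_Z, then {p,q} is an edge of the perturbed graph G_{Z ∪ {v}}. (This graph-composition step drives the induction in the proof of Theorem 3: perturbing node v merges its neighborhoods in the already-perturbed graph.) -/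
/-- if `{p,v}` and `{v,q}` are edges of the perturbed graph `G_Z` with
`p, q, v` distinct, then `{p,q}` is an edge of the perturbed graph `G_{Z ∪ {v}}`. -/
theorem stmt6 {V : Type*} [Fintype V] (G : SimpleGraph V) (Z : Set V)
    (p q v : V) (hpq : p ≠ q) (hpv : p ≠ v) (hqv : q ≠ v)
    (h1 : PerturbedAdj G Z p v) (h2 : PerturbedAdj G Z v q) :
    PerturbedAdj G (Z ∪ {v}) p q := by
  obtain ⟨-, w1, hw1⟩ := h1
  obtain ⟨-, w2, hw2⟩ := h2
  refine ⟨hpq, w1.append w2, ?_⟩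
  intro x hx hxp hxq
  rcases (SimpleGraph.Walk.mem_support_append_iff _ _).1 hx with hx1 | hx2
  · by_cases hxv : x = v
    · exact Or.inr hxv
    · exact Or.inl (hw1 x hx1 hxp hxv)
  · by_cases hxv : x = v
    · exact Or.inr hxv
    · exact Or.inl (hw2 x hx2 hxv hxq)
end

section
/- Let G be a simple graph on a finite vertex set V, let Z' ⊆ V, let v be a vertex, and let c₁, …, c_m ⊆ V be finitely many cliques of the perturbed graph G_{Z'}, each containing v. Then the union c₁ ∪ ⋯ ∪ c_m is a clique of the perturbed graph G_{Z' ∪ {v}}. (This clique-merging lemma is the key step in the induction of Lemma 1: marginalizing out the perturbed variable at v fuses all cliques through v into a single clique of the further-perturbed graph.) -/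
lemma perturbedAdj_mono {V : Type*} {G : SimpleGraph V} {Z Z'' : Set V} (h : Z ⊆ Z'')
    {p q : V} (hpq : PerturbedAdj G Z p q) : PerturbedAdj G Z'' p q := by
  obtain ⟨hne, w, hw⟩ := hpq
  exact ⟨hne, w, fun u hu h1 h2 => h (hw u hu h1 h2)⟩

/-- clique merging: if `c₁, …, c_m` are cliques of the perturbed graph
`G_{Z'}`, each containing the vertex `v`, then their union is a clique of the
perturbed graph `G_{Z' ∪ {v}}`. -/
theorem stmt9 {V : Type*} [Fintype V] (G : SimpleGraph V) (Z' : Set V) (v : V)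
    (m : ℕ) (c : Fin m → Set V)
    (hclique : ∀ k, (c k).Pairwise (PerturbedAdj G Z'))
    (hv : ∀ k, v ∈ c k) :
    (⋃ k, c k).Pairwise (PerturbedAdj G (Z' ∪ {v})) := by
  intro p hp q hq hpq
  simp only [Set.mem_iUnion] at hp hq
  obtain ⟨i, hpi⟩ := hp
  obtain ⟨j, hqj⟩ := hq
  have hsub : Z' ⊆ Z' ∪ {v} := Set.subset_union_left
  by_cases hpv : p = v
  · subst hpv
    exact perturbedAdj_mono hsub (hclique j (hv j) hqj hpq)
  by_cases hqv : q = v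
  · subst hqv
    exact perturbedAdj_mono hsub (hclique i hpi (hv i) hpq)
  · obtain ⟨_, w1, hw1⟩ := hclique i hpi (hv i) hpv
    obtain ⟨_, w2, hw2⟩ := hclique j (hv j) hqj (fun h => hqv h.symm)
    refine ⟨hpq, w1.append w2, fun u hu h1 h2 => ?_⟩
    by_cases huv : u = v
    · exact Or.inr huv
    · rw [SimpleGraph.Walk.mem_support_append_iff] at hu
      rcases hu with hu | hu
      · exact Or.inl (hw1 u hu h1 huv)
      · exact Or.inl (hw2 u hu huv h2)
end

section
/- Let V be a finite vertex set, H a simple graph on V, and for each i ∈ V let S i be a nonempty finite type. Suppose f : (∀ i, S i) → ℝ≥0 factorizes according to H, i.e., f = ∏_{c ∈ C} φ_c where each c ∈ C is a clique of H and each φ_c is a nonnegative function of the coordinates in c. Then for every pair of distinct non-adjacent vertices p, q of H, the pairwise conditional-independence identity holds: for every configuration x ∈ ∏ i, S i and all values a, a' ∈ S p and b, b' ∈ S q, f(x[p:=a][q:=b]) · f(x[p:=a'][q:=b']) = f(x[p:=a][q:=b']) · f(x[p:=a'][q:=b]). (This is the pairwise Markov property of factorizing distributions, used in the proof of Theorem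 4.) -/
/-!
A clique of `H` cannot contain both of the non-adjacent vertices `p` and `q`, so each factor
`φ_c` ignores the coordinate at `p` or the one at `q`; for such a factor the two sides of the
identity are the same two values in a different order. The identity is multiplicative in `f`,
so it passes to the product of the factors.
-/

open scoped NNReal
open Function

section PairwiseCIIdentity

variable {ι : Type*} [DecidableEq ι] {α : ι → Type*} {M : Type*}

def PairwiseCIIdentity [Mul M] (g : (Π i, α i) → M) (p q : ι) : Prop :=
  ∀ (x : Π i, α i) (a a' : α p) (b b' : α q),
    g (update (update x p a) q b) * g (update (update x p a') q b') =
      g (update (update x p a) q b') * g (update (update x p a') q b)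

theorem DependsOn.apply_update_eq_of_notMem {g : (Π i, α i) → M} {s : Set ι}
    (hg : DependsOn g s) {i : ι} (hi : i ∉ s) (x : Π i, α i) (a a' : α i) :
    g (Function.update x i a) = g (Function.update x i a') :=
  hg fun j hj => by
    rw [update_of_ne (ne_of_mem_of_not_mem hj hi), update_of_ne (ne_of_mem_of_not_mem hj hi)]

theorem DependsOn.pairwiseCIIdentity [CommMagma M] {g : (Π i, α i) → M} {s : Set ι}
    (hg : DependsOn g s) {p q : ι} (hpq : p ≠ q) (hs : ¬(p ∈ s ∧ q ∈ s)) :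
    PairwiseCIIdentity g p q := by
  intro x a a' b b'
  by_cases hq : q ∈ s
  · have hp : p ∉ s := fun hp => hs ⟨hp, hq⟩
    have hignore_p : ∀ a a' b, g (Function.update (Function.update x p a) q b) =
        g (Function.update (Function.update x p a') q b) := by
      intro a a' b
      rw [update_comm hpq, update_comm hpq]
      exact hg.apply_update_eq_of_notMem hp _ a a'
    rw [hignore_p a a' b, hignore_p a' a b', mul_comm]
  · have hignore_q : ∀ a b b', g (Function.update (Function.update x p a) q b) =
        g (Function.update (Function.update x p a) q b') :=
      fun a => hg.apply_update_eq_of_notMem hq _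
    rw [hignore_q a b b', hignore_q a' b' b]

theorem pairwiseCIIdentity_prod [CommMonoid M] {κ : Type*} {t : Finset κ}
    {g : κ → (Π i, α i) → M} {p q : ι} (hg : ∀ k ∈ t, PairwiseCIIdentity (g k) p q) :
    PairwiseCIIdentity (fun x => ∏ k ∈ t, g k x) p q := by
  intro x a a' b b'
  simp only [← Finset.prod_mul_distrib]
  exact Finset.prod_congr rfl fun k hk => hg k hk x a a' b b'

end PairwiseCIIdentity

theorem stmt11_general {V : Type*} [DecidableEq V] (H : SimpleGraph V)
    (S : V → Type*)
    (m : ℕ) (c : Fin m → Set V) (hc : ∀ k, H.IsClique (c k))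
    (φ : Fin m → (∀ i, S i) → ℝ≥0)
    (hφ : ∀ k (x x' : ∀ i, S i), (∀ v ∈ c k, x v = x' v) → φ k x = φ k x')
    (f : (∀ i, S i) → ℝ≥0) (hf : ∀ x, f x = ∏ k, φ k x)
    (p q : V) (hpq : p ≠ q) (hnadj : ¬ H.Adj p q) :
    ∀ (x : ∀ i, S i) (a a' : S p) (b b' : S q),
      f (Function.update (Function.update x p a) q b) *
        f (Function.update (Function.update x p a') q b') =
      f (Function.update (Function.update x p a) q b') *
        f (Function.update (Function.update x p a') q b) := by
  have hfactor : ∀ k, PairwiseCIIdentity (φ k) p q := fun k =>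
    DependsOn.pairwiseCIIdentity (fun _ _ => hφ k _ _) hpq
      fun ⟨hp, hq⟩ => hnadj (hc k hp hq hpq)
  intro x a a' b b'
  simpa only [hf] using pairwiseCIIdentity_prod (fun k _ => hfactor k) x a a' b b'

/-- pairwise Markov property of factorizing distributions: if
`f = ∏_c φ_c` with each `c` a clique of `H` and each `φ_c` depending only on the
coordinates in `c`, then for every pair of distinct non-adjacent vertices `p, q`,
the pairwise conditional-independence identity holds. -/
theorem stmt11 {V : Type*} [Fintype V] [DecidableEq V] (H : SimpleGraph V)
    (S : V → Type*) [∀ i, Fintype (S i)] [∀ i, Nonempty (S i)]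
    (m : ℕ) (c : Fin m → Set V) (hc : ∀ k, H.IsClique (c k))
    (φ : Fin m → (∀ i, S i) → ℝ≥0)
    (hφ : ∀ k (x x' : ∀ i, S i), (∀ v ∈ c k, x v = x' v) → φ k x = φ k x')
    (f : (∀ i, S i) → ℝ≥0) (hf : ∀ x, f x = ∏ k, φ k x)
    (p q : V) (hpq : p ≠ q) (hnadj : ¬ H.Adj p q) :
    ∀ (x : ∀ i, S i) (a a' : S p) (b b' : S q),
      f (Function.update (Function.update x p a) q b) *
        f (Function.update (Function.update x p a') q b') =
      f (Function.update (Function.update x p a) q b') *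
        f (Function.update (Function.update x p a') q b) :=
  stmt11_general H S m c hc φ hφ f hf p q hpq hnadj
end

section
/- Let V be a finite vertex set, G a simple graph on V, Z ⊆ V a set of perturbed nodes, and for each i ∈ V let S i be a nonempty finite type and for each i ∈ Z let T i be a nonempty finite type. Suppose the joint weight P(y,u) = ∏_{q ∈ Q} Ψ_q(y restricted to q) · ∏_{i ∈ Z} Ψ_i(y i, u i) is a finite product where each q ∈ Q is a clique of G and all factors are nonnegative, and let f denote the observed marginal obtained by summing P over the hidden coordinates (y i for i ∈ Z), viewed as a function of the observed variables (y i for i ∉ Z and u i for i ∈ Z), indexed by V. If two distinct nodes p and q are NOT adjacent in the perturbed graph G_Z, then the observed marginal f satisfies the pairwise conditional-independence identity at (p,q): for every observed configuration x and all values a, a' at p and b, b' at q, f(x[p:=a][q:=b]) · f(x[p:=a'][q:=b']) = f(x[p:=a][q:=b']) · f(x[p:=a'][q:=b]). (This is the separation direction of Theorem 4: non-neighbors in the perturbed graph are conditionally independent given all other observed variables.) -/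
/-!
Let `A` be the set of vertices reachable from `p` by walks whose interior lies in `Z`; it
contains `p` but not `q`. A clique containing a hidden vertex of `A`, or `p`, lies inside `A`,
so every factor of the joint weight reads the coordinates in `Z ∪ {p, q}` either only inside
`A` or only outside `A`. Hence exchanging the `A`-parts of two full configurations preserves the
product of their weights. Summed over pairs of hidden configurations (the exchange is an
involution on such pairs), this turns `f(a, b) f(a', b')` into `f(a, b') f(a', b)`.
-/

open scoped NNReal

open Function Finset

section Piecewise

variable {ι : Type*} {X : ι → Type*}

lemma DependsOn.mul_piecewise_swap {R : Type*} [CommMagma R] {φ : (∀ i, X i) → R}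
    {C D M : Set ι} [∀ i, Decidable (i ∈ M)] (hφ : DependsOn φ C) {z z' : ∀ i, X i}
    (hzz' : ∀ i ∉ D, z i = z' i) (hCD : C ∩ D ⊆ M ∨ C ∩ D ⊆ Mᶜ) :
    φ (M.piecewise z z') * φ (M.piecewise z' z) = φ z * φ z' := by
  rcases hCD with hM | hM
  · congr 1 <;> refine hφ fun i hi => ?_
    all_goals
      by_cases hiM : i ∈ M
      · simp [hiM]
      · have hiD : i ∉ D := fun hiD => hiM (hM ⟨hi, hiD⟩)
        simp [hiM, hzz' i hiD]
  · rw [mul_comm (φ z)]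
    congr 1 <;> refine hφ fun i hi => ?_
    all_goals
      by_cases hiM : i ∈ M
      · have hiD : i ∉ D := fun hiD => hM ⟨hi, hiD⟩ hiM
        simp [hiM, hzz' i hiD]
      · simp [hiM]

lemma prod_mul_prod_piecewise_swap {R κ : Type*} [CommMonoid R] (s : Finset κ)
    {φ : κ → (∀ i, X i) → R} {C : κ → Set ι} {D M : Set ι} [∀ i, Decidable (i ∈ M)]
    (hφ : ∀ k, DependsOn (φ k) (C k)) {z z' : ∀ i, X i} (hzz' : ∀ i ∉ D, z i = z' i)
    (hCD : ∀ k ∈ s, C k ∩ D ⊆ M ∨ C k ∩ D ⊆ Mᶜ) :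
    (∏ k ∈ s, φ k (M.piecewise z z')) * ∏ k ∈ s, φ k (M.piecewise z' z) =
      (∏ k ∈ s, φ k z) * ∏ k ∈ s, φ k z' := by
  simp only [← prod_mul_distrib]
  exact prod_congr rfl fun k hk => (hφ k).mul_piecewise_swap hzz' (hCD k hk)

lemma sum_sum_piecewise_swap [Fintype ι] [DecidableEq ι] [∀ i, Fintype (X i)]
    {R : Type*} [AddCommMonoid R] (M : Set ι) [∀ i, Decidable (i ∈ M)]
    (g : (∀ i, X i) → (∀ i, X i) → R) :
    ∑ h, ∑ h', g (M.piecewise h h') (M.piecewise h' h) = ∑ h, ∑ h', g h h' := by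
  have hinv : Involutive fun hh : (∀ i, X i) × (∀ i, X i) =>
      (M.piecewise hh.1 hh.2, M.piecewise hh.2 hh.1) := by
    intro hh
    ext i <;> by_cases hi : i ∈ M <;> simp [hi]
  simp only [← Fintype.sum_prod_type']
  exact Fintype.sum_equiv hinv.toPerm _ _ fun _ => rfl

lemma piecewise_update_update [DecidableEq ι] (M : Set ι) [∀ i, Decidable (i ∈ M)]
    {p q : ι} (hp : p ∈ M) (hq : q ∉ M) (x : ∀ i, X i) (a a' : X p) (b b' : X q) :
    M.piecewise (update (update x p a) q b) (update (update x p a') q b') =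
      update (update x p a) q b' := by
  ext i
  by_cases hi : i ∈ M
  · have hiq : i ≠ q := fun h => hq (h ▸ hi)
    simp [hi, hiq]
  · have hip : i ≠ p := fun h => hi (h ▸ hp)
    rcases eq_or_ne i q with rfl | hiq
    · simp [hi]
    · simp [hi, hip, hiq]

end Piecewise

namespace SimpleGraph

variable {V : Type*} (G : SimpleGraph V) (Z : Set V)

def ReachableThrough (p v : V) : Prop :=
  ∃ w : G.Walk p v, ∀ x ∈ w.support, x ≠ p → x ≠ v → x ∈ Z

variable {G Z}

lemma reachableThrough_refl (p : V) : G.ReachableThrough Z p p :=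
  ⟨Walk.nil, by simp⟩

lemma ReachableThrough.of_adj {p v w : V} (hv : G.ReachableThrough Z p v)
    (hvZ : v ∈ Z ∨ v = p) (h : G.Adj v w) : G.ReachableThrough Z p w := by
  obtain ⟨W, hW⟩ := hv
  refine ⟨W.concat h, fun x hx hxp hxw => ?_⟩
  rw [Walk.support_concat, List.mem_append, List.mem_singleton] at hx
  rcases hx with hx | rfl
  · rcases eq_or_ne x v with rfl | hxv
    · exact hvZ.resolve_right hxp
    · exact hW x hx hxp hxv
  · exact absurd rfl hxw

lemma IsClique.inter_subset_reachableThrough_or_compl {c : Set V} (hc : G.IsClique c)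
    {p q : V} (hq : ¬ G.ReachableThrough Z p q) :
    c ∩ (Z ∪ {p, q}) ⊆ {v | G.ReachableThrough Z p v} ∨
      c ∩ (Z ∪ {p, q}) ⊆ {v | G.ReachableThrough Z p v}ᶜ := by
  by_cases h : ∃ v ∈ c, (v ∈ Z ∨ v = p) ∧ G.ReachableThrough Z p v
  · obtain ⟨v, hvc, hvZ, hv⟩ := h
    left
    rintro w ⟨hwc, -⟩
    rcases eq_or_ne v w with rfl | hvw
    · exact hv
    · exact hv.of_adj hvZ (hc hvc hwc hvw)
  · push Not at h
    right
    rintro v ⟨hvc, hvD⟩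
    simp only [Set.mem_union, Set.mem_insert_iff, Set.mem_singleton_iff] at hvD
    rcases hvD with hvZ | hvp | rfl
    · exact h v hvc (Or.inl hvZ)
    · exact h v hvc (Or.inr hvp)
    · exact hq

end SimpleGraph

section Marginal

variable {V : Type*} (Z : Finset V) {S T : V → Type*}

lemma cliqueWeight_piecewise_swap {R κ : Type*} [CommMonoid R] [Fintype κ] {C : κ → Set V}
    {D M : Set V} [∀ i, Decidable (i ∈ M)] (Ψ : κ → (∀ i, S i) → R)
    (hΨ : ∀ k, DependsOn (Ψ k) (C k)) (Ψp : ∀ i, S i → T i → R) (hCD : ∀ k, C k ∩ D ⊆ M ∨ C k ∩ D ⊆ Mᶜ)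
    {y y' : ∀ i, S i} (hyy' : ∀ i ∉ D, y i = y' i) (u u' : ∀ i, T i) :
    ((∏ k, Ψ k (M.piecewise y y')) *
        ∏ i ∈ Z, Ψp i (M.piecewise y y' i) (M.piecewise u u' i)) *
      ((∏ k, Ψ k (M.piecewise y' y)) *
        ∏ i ∈ Z, Ψp i (M.piecewise y' y i) (M.piecewise u' u i)) =
    ((∏ k, Ψ k y) * ∏ i ∈ Z, Ψp i (y i) (u i)) *
      ((∏ k, Ψ k y') * ∏ i ∈ Z, Ψp i (y' i) (u' i)) := by
  have hpointwise : (∏ i ∈ Z, Ψp i (M.piecewise y y' i) (M.piecewise u u' i)) *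
      ∏ i ∈ Z, Ψp i (M.piecewise y' y i) (M.piecewise u' u i) =
      (∏ i ∈ Z, Ψp i (y i) (u i)) * ∏ i ∈ Z, Ψp i (y' i) (u' i) := by
    simp only [← prod_mul_distrib]
    refine prod_congr rfl fun i _ => ?_
    by_cases hiM : i ∈ M
    · simp [hiM]
    · simp [hiM, mul_comm]
  rw [mul_mul_mul_comm, mul_mul_mul_comm (∏ k, Ψ k y),
    prod_mul_prod_piecewise_swap univ hΨ hyy' fun k _ => hCD k, hpointwise]

variable [DecidableEq V]

def fillHidden (y : ∀ i, S i) (h : ∀ i : Z, S i) : ∀ i, S i :=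
  fun i => if hi : i ∈ Z then h ⟨i, hi⟩ else y i

lemma fillHidden_of_notMem {i : V} (hi : i ∉ Z) (y : ∀ i, S i) (h : ∀ i : Z, S i) :
    fillHidden Z y h i = y i :=
  dif_neg hi

lemma fillHidden_piecewise (M : Set V) [∀ i, Decidable (i ∈ M)] (y y' : ∀ i, S i)
    (h h' : ∀ i : Z, S i) :
    fillHidden Z (M.piecewise y y') ({i : Z | ↑i ∈ M}.piecewise h h') =
      M.piecewise (fillHidden Z y h) (fillHidden Z y' h') := by
  ext i
  by_cases hiZ : i ∈ Z <;> by_cases hiM : i ∈ M <;> simp [fillHidden, hiZ, hiM]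

variable [∀ i, Fintype (S i)]

lemma sum_fillHidden_mul_sum_fillHidden {R : Type*} [CommSemiring R]
    (P : (∀ i, S i) → (∀ i, T i) → R) {D M : Set V} [∀ i, Decidable (i ∈ M)]
    (hZD : ↑Z ⊆ D)
    (hP : ∀ y y' u u', (∀ i ∉ D, y i = y' i) →
      P (M.piecewise y y') (M.piecewise u u') * P (M.piecewise y' y) (M.piecewise u' u) =
        P y u * P y' u')
    {y y' : ∀ i, S i} (hyy' : ∀ i ∉ D, y i = y' i) (u u' : ∀ i, T i) :
    (∑ h, P (fillHidden Z y h) u) * ∑ h, P (fillHidden Z y' h) u' =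
      (∑ h, P (fillHidden Z (M.piecewise y y') h) (M.piecewise u u')) *
        ∑ h, P (fillHidden Z (M.piecewise y' y) h) (M.piecewise u' u) := by
  have hfill : ∀ h h', ∀ i ∉ D, fillHidden Z y h i = fillHidden Z y' h' i := fun h h' i hi => by
    rw [fillHidden_of_notMem Z (fun hiZ => hi (hZD hiZ)), fillHidden_of_notMem Z
      (fun hiZ => hi (hZD hiZ)), hyy' i hi]
  simp only [Fintype.sum_mul_sum]
  conv_rhs => rw [← sum_sum_piecewise_swap {i : Z | ↑i ∈ M}]
  refine Fintype.sum_congr _ _ fun h => Fintype.sum_congr _ _ fun h' => ?_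
  rw [fillHidden_piecewise, fillHidden_piecewise, hP _ _ _ _ (hfill h h')]

end Marginal

theorem stmt12_general {V : Type*} [DecidableEq V] (G : SimpleGraph V)
    (Z : Finset V)
    (S : V → Type*) [∀ i, Fintype (S i)]
    (T : V → Type*)
    (m : ℕ) (q0 : Fin m → Set V) (hq0 : ∀ k, G.IsClique (q0 k))
    (Ψ : Fin m → (∀ i, S i) → ℝ≥0)
    (hΨ : ∀ k (y y' : ∀ i, S i), (∀ v ∈ q0 k, y v = y' v) → Ψ k y = Ψ k y')
    (Ψp : ∀ i : V, S i → T i → ℝ≥0)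
    (P : (∀ i, S i) → (∀ i, T i) → ℝ≥0)
    (hP : ∀ y u, P y u = (∏ k, Ψ k y) * ∏ i ∈ Z, Ψp i (y i) (u i))
    (f : (∀ i, S i) → (∀ i, T i) → ℝ≥0)
    (hf : ∀ yb u, f yb u =
      ∑ h : (∀ i : {x // x ∈ Z}, S i),
        P (fun i => if hi : i ∈ Z then h ⟨i, hi⟩ else yb i) u)
    (p q : V) (hpq : p ≠ q) (hnadj : ¬ PerturbedAdj G (↑Z) p q) :
    ∀ (x : ∀ i, S i) (w : ∀ i, T i)
      (a a' : S p) (ta ta' : T p) (b b' : S q) (tb tb' : T q),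
      f (Function.update (Function.update x p a) q b)
          (Function.update (Function.update w p ta) q tb) *
        f (Function.update (Function.update x p a') q b')
          (Function.update (Function.update w p ta') q tb') =
      f (Function.update (Function.update x p a) q b')
          (Function.update (Function.update w p ta) q tb') *
        f (Function.update (Function.update x p a') q b)
          (Function.update (Function.update w p ta') q tb) := by
  classical
  intro x w a a' ta ta' b b' tb tb'
  set A : Set V := {v | G.ReachableThrough Z p v}
  have hp : p ∈ A := G.reachableThrough_refl p
  have hq : q ∉ A := fun h => hnadj ⟨hpq, h⟩
  have hPswap : ∀ y y' u u', (∀ i ∉ (↑Z ∪ {p, q} : Set V), y i = y' i) →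
      P (A.piecewise y y') (A.piecewise u u') * P (A.piecewise y' y) (A.piecewise u' u) =
        P y u * P y' u' := fun y y' u u' hyy' => by
    simp only [hP]
    exact cliqueWeight_piecewise_swap Z Ψ (fun k _ _ => hΨ k _ _) Ψp
      (fun k => (hq0 k).inter_subset_reachableThrough_or_compl hq) hyy' u u'
  have hxx' : ∀ i ∉ (↑Z ∪ {p, q} : Set V), update (update x p a) q b i =
      update (update x p a') q b' i := fun i hi => by
    simp only [Set.mem_union, Set.mem_insert_iff, Set.mem_singleton_iff, not_or] at hi
    simp [hi.2.1, hi.2.2]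
  simp only [show ∀ y u, f y u = ∑ h, P (fillHidden Z y h) u from hf]
  rw [sum_fillHidden_mul_sum_fillHidden Z P Set.subset_union_left hPswap hxx']
  simp only [piecewise_update_update A hp hq]

/-- separation direction of Theorem 4: if `p` and `q` are not
adjacent in the perturbed graph `G_Z`, then the observed marginal `f` (obtained from
the clique-factorized joint weight by summing out the hidden coordinates `y i`,
`i ∈ Z`) satisfies the pairwise conditional-independence identity at `(p,q)`.
The observed value at a vertex `i` is `y i` if `i ∉ Z` and `u i` if `i ∈ Z`;
updates are performed jointly on both components, on which `f` depends only through
the observed one. -/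
theorem stmt12 {V : Type*} [Fintype V] [DecidableEq V] (G : SimpleGraph V)
    (Z : Finset V)
    (S : V → Type*) [∀ i, Fintype (S i)] [∀ i, Nonempty (S i)]
    (T : V → Type*) [∀ i, Fintype (T i)] [∀ i, Nonempty (T i)]
    (m : ℕ) (q0 : Fin m → Set V) (hq0 : ∀ k, G.IsClique (q0 k))
    (Ψ : Fin m → (∀ i, S i) → ℝ≥0)
    (hΨ : ∀ k (y y' : ∀ i, S i), (∀ v ∈ q0 k, y v = y' v) → Ψ k y = Ψ k y')
    (Ψp : ∀ i : V, S i → T i → ℝ≥0)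
    (P : (∀ i, S i) → (∀ i, T i) → ℝ≥0)
    (hP : ∀ y u, P y u = (∏ k, Ψ k y) * ∏ i ∈ Z, Ψp i (y i) (u i))
    (f : (∀ i, S i) → (∀ i, T i) → ℝ≥0)
    (hf : ∀ yb u, f yb u =
      ∑ h : (∀ i : {x // x ∈ Z}, S i),
        P (fun i => if hi : i ∈ Z then h ⟨i, hi⟩ else yb i) u)
    (p q : V) (hpq : p ≠ q) (hnadj : ¬ PerturbedAdj G (↑Z) p q) :
    ∀ (x : ∀ i, S i) (w : ∀ i, T i)
      (a a' : S p) (ta ta' : T p) (b b' : S q) (tb tb' : T q),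
      f (Function.update (Function.update x p a) q b)
          (Function.update (Function.update w p ta) q tb) *
        f (Function.update (Function.update x p a') q b')
          (Function.update (Function.update w p ta') q tb') =
      f (Function.update (Function.update x p a) q b')
          (Function.update (Function.update w p ta) q tb') *
        f (Function.update (Function.update x p a') q b)
          (Function.update (Function.update w p ta') q tb) :=
  stmt12_general G Z S T m q0 hq0 Ψ hΨ Ψp P hP f hf p q hpq hnadj
end

section
/- Let (Ω, P) be a probability space, let y : ℤ → Ω → ℝ be a wide-sense stationary process with autocorrelation R : ℤ → ℝ, and let (d_t)_{t∈ℤ} be mutually independent random delays, each taking values in a fixed finite set J ⊆ ℤ with P(d_t = j) = p_j, with the whole delay family independent of the whole process y. Define u_t(ω) = y_{t − d_t(ω)}(ω), the mean-corruption output ū_t = Σ_{j∈J} p_j · y_{t−j}, and Δu_t = u_t − ū_t. Then: (i) E[u_t · u_s] = Σ_{j,l ∈ J} p_j · p_l · R(t − s − j + l) whenever t ≠ s, and E[u_t²] = R(0); (ii) E[Δu_t · Δu_s] = 0 whenever t ≠ s; and (iii) E[Δu_t²] = R(0) − Σ_{j,l ∈ J} p_j · p_l · R(j − l). (These are the autocorrelation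 and perturbation-noise computations for the random delay corruption model, giving Φ_{uu} = H Φ_{yy} H* + θ with θ constant.) -/
/-!
Write `u t = ∑ j, 1{d t = j} • y (t - j)` and `Δu t = ∑ j, (1{d t = j} - p j) • y (t - j)`.
Because the delays are independent of `y`, every second moment of such a randomly weighted
sum factors as `∑ j l, E[a j • b l] • R (t - s - j + l)`, where only the weights involve the
delays. For `t ≠ s` the weights at `t` and `s` are independent, so the centred weights of `Δu`
are uncorrelated; for `t = s` the weight moments come from the law `p` of a single delay,
with `∑ j, p j = 1`.
-/

open MeasureTheory ProbabilityTheory Finset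

structure IsWideSenseStationary {Ω : Type*} [MeasurableSpace Ω] (y : ℤ → Ω → ℝ) (R : ℤ → ℝ)
    (μ : Measure Ω) : Prop where
  memLp : ∀ t, MemLp (y t) 2 μ
  autocorrelation : ∀ t k, ∫ ω, y (t + k) ω * y t ω ∂μ = R k

namespace IsWideSenseStationary

variable {Ω α : Type*} [MeasurableSpace Ω] [MeasurableSpace α] {μ : Measure Ω}
  {y : ℤ → Ω → ℝ} {R : ℤ → ℝ}

theorem integral_mul (hy : IsWideSenseStationary y R μ) (a b : ℤ) :
    ∫ ω, y a ω * y b ω ∂μ = R (a - b) := by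
  simpa using hy.autocorrelation b (a - b)

theorem integrable_mul (hy : IsWideSenseStationary y R μ) (a b : ℤ) :
    Integrable (fun ω => y a ω * y b ω) μ :=
  (hy.memLp a).integrable_mul (hy.memLp b)

theorem integral_sum_mul_sum (hy : IsWideSenseStationary y R μ) {D : Ω → α}
    (hindep : IndepFun D (fun ω t => y t ω) μ) {a b : ℤ → α → ℝ}
    (ha : ∀ j, Measurable (a j)) (hb : ∀ l, Measurable (b l))
    (hab : ∀ j l, Integrable (fun ω => a j (D ω) * b l (D ω)) μ) (J K : Finset ℤ) (t s : ℤ) :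
    ∫ ω, (∑ j ∈ J, a j (D ω) * y (t - j) ω) * (∑ l ∈ K, b l (D ω) * y (s - l) ω) ∂μ
      = ∑ j ∈ J, ∑ l ∈ K, (∫ ω, a j (D ω) * b l (D ω) ∂μ) * R (t - s - j + l) := by
  have hfactor : ∀ j l, IndepFun (fun ω => a j (D ω) * b l (D ω))
      (fun ω => y (t - j) ω * y (s - l) ω) μ := fun j l =>
    hindep.comp ((ha j).mul (hb l)) ((measurable_pi_apply _).mul (measurable_pi_apply _))
  have hterm : ∀ j l, Integrable
      (fun ω => a j (D ω) * b l (D ω) * (y (t - j) ω * y (s - l) ω)) μ := fun j l =>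
    (hfactor j l).integrable_mul (hab j l) (hy.integrable_mul _ _)
  calc ∫ ω, (∑ j ∈ J, a j (D ω) * y (t - j) ω) * (∑ l ∈ K, b l (D ω) * y (s - l) ω) ∂μ
      = ∫ ω, ∑ j ∈ J, ∑ l ∈ K,
          a j (D ω) * b l (D ω) * (y (t - j) ω * y (s - l) ω) ∂μ := by
        congr 1 with ω
        rw [sum_mul_sum]
        exact sum_congr rfl fun j _ => sum_congr rfl fun l _ => by ring
    _ = ∑ j ∈ J, ∑ l ∈ K, (∫ ω, a j (D ω) * b l (D ω) ∂μ) * R (t - s - j + l) := by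
        rw [integral_finsetSum _ fun j _ => integrable_finsetSum _ fun l _ => hterm j l]
        refine sum_congr rfl fun j _ => ?_
        rw [integral_finsetSum _ fun l _ => hterm j l]
        refine sum_congr rfl fun l _ => ?_
        rw [(hfactor j l).integral_fun_mul_eq_mul_integral (hab j l).aestronglyMeasurable
          (hy.integrable_mul _ _).aestronglyMeasurable, hy.integral_mul,
          show t - j - (s - l) = t - s - j + l by ring]

end IsWideSenseStationary

namespace RandomDelay

def indicator (j i : ℤ) : ℝ := if i = j then 1 else 0

section Moments

variable {J : Finset ℤ} {p : ℤ → ℝ} {j l : ℤ}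

theorem sum_mul_indicator (hj : j ∈ J) : ∑ i ∈ J, p i * indicator j i = p j := by
  simp [indicator, hj]

theorem sum_mul_indicator_sub_self (hpsum : ∑ i ∈ J, p i = 1) (hj : j ∈ J) :
    ∑ i ∈ J, p i * (indicator j i - p j) = 0 := by
  simp only [mul_sub, sum_sub_distrib, sum_mul_indicator hj, ← sum_mul, hpsum, one_mul, sub_self]

theorem sum_mul_indicator_mul_indicator (hj : j ∈ J) :
    ∑ i ∈ J, p i * (indicator j i * indicator l i) = if j = l then p j else 0 := by
  by_cases hjl : j = l
  · subst hjl
    simp [indicator, hj]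
  · simp [indicator, hjl, Ne.symm hjl]

theorem sum_mul_indicator_sub_mul_indicator_sub (hpsum : ∑ i ∈ J, p i = 1) (hj : j ∈ J)
    (hl : l ∈ J) : ∑ i ∈ J, p i * ((indicator j i - p j) * (indicator l i - p l))
      = (if j = l then p j else 0) - p j * p l :=
  calc ∑ i ∈ J, p i * ((indicator j i - p j) * (indicator l i - p l))
      = ∑ i ∈ J, p i * (indicator j i * indicator l i) - p j * ∑ i ∈ J, p i * indicator l i
          - p l * ∑ i ∈ J, p i * (indicator j i - p j) := by
        rw [mul_sum, mul_sum, ← sum_sub_distrib, ← sum_sub_distrib]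
        exact sum_congr rfl fun i _ => by ring
    _ = (if j = l then p j else 0) - p j * p l := by
        rw [sum_mul_indicator_mul_indicator hj, sum_mul_indicator hl,
          sum_mul_indicator_sub_self hpsum hj, mul_zero, sub_zero]

theorem sum_sum_ite_mul (hpsum : ∑ i ∈ J, p i = 1) (f : ℤ → ℝ) :
    ∑ j ∈ J, ∑ l ∈ J, (if j = l then p j else 0) * f (l - j) = f 0 :=
  calc ∑ j ∈ J, ∑ l ∈ J, (if j = l then p j else 0) * f (l - j) = ∑ j ∈ J, p j * f 0 :=
        sum_congr rfl fun j hj => by simp only [ite_mul, zero_mul, sum_ite_eq, if_pos hj, sub_self]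
    _ = f 0 := by rw [← sum_mul, hpsum, one_mul]

theorem sum_sum_moment_mul (hpsum : ∑ i ∈ J, p i = 1) (f : ℤ → ℝ) :
    ∑ j ∈ J, ∑ l ∈ J, (∑ i ∈ J, p i * (indicator j i * indicator l i)) * f (l - j) = f 0 := by
  rw [← sum_sum_ite_mul hpsum f]
  exact sum_congr rfl fun j hj => sum_congr rfl fun l _ => by
    rw [sum_mul_indicator_mul_indicator hj]

theorem sum_sum_centered_moment_mul (hpsum : ∑ i ∈ J, p i = 1) (f : ℤ → ℝ) :
    ∑ j ∈ J, ∑ l ∈ J,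
        (∑ i ∈ J, p i * ((indicator j i - p j) * (indicator l i - p l))) * f (l - j)
      = f 0 - ∑ j ∈ J, ∑ l ∈ J, p j * p l * f (j - l) :=
  calc _ = ∑ j ∈ J, ∑ l ∈ J, (if j = l then p j else 0) * f (l - j)
          - ∑ l ∈ J, ∑ j ∈ J, p j * p l * f (l - j) := by
        rw [sum_comm (s := J) (t := J) (f := fun l j => p j * p l * f (l - j)),
          ← sum_sub_distrib]
        refine sum_congr rfl fun j hj => ?_
        rw [← sum_sub_distrib]
        exact sum_congr rfl fun l hl => by
          rw [sum_mul_indicator_sub_mul_indicator_sub hpsum hj hl, sub_mul]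
    _ = f 0 - ∑ j ∈ J, ∑ l ∈ J, p j * p l * f (j - l) := by
        rw [sum_sum_ite_mul hpsum f]
        exact congrArg _ (sum_congr rfl fun l _ => sum_congr rfl fun j _ => by ring)

end Moments

end RandomDelay

structure IsRandomDelay {Ω : Type*} [MeasurableSpace Ω] (d : ℤ → Ω → ℤ) (J : Finset ℤ)
    (p : ℤ → ℝ) (μ : Measure Ω) : Prop where
  measurable : ∀ t, Measurable (d t)
  mem : ∀ t ω, d t ω ∈ J
  prob_eq : ∀ t, ∀ j ∈ J, (μ {ω | d t ω = j}).toReal = p j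

namespace IsRandomDelay

variable {Ω : Type*} [MeasurableSpace Ω] {μ : Measure Ω} [IsProbabilityMeasure μ]
  {d : ℤ → Ω → ℤ} {J : Finset ℤ} {p : ℤ → ℝ} {y : ℤ → Ω → ℝ} {R : ℤ → ℝ}

theorem integral_comp (hd : IsRandomDelay d J p μ) (f : ℤ → ℝ) (t : ℤ) :
    ∫ ω, f (d t ω) ∂μ = ∑ i ∈ J, p i * f i := by
  have hmeas : ∀ i, MeasurableSet {ω | d t ω = i} := fun i =>
    hd.measurable t (measurableSet_singleton i)
  have hsum : ∀ ω, f (d t ω) = ∑ i ∈ J, {ω | d t ω = i}.indicator (fun _ => f i) ω := fun ω => by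
    simp [Set.indicator_apply, sum_ite_eq, hd.mem t ω]
  simp_rw [hsum]
  rw [integral_finsetSum _ fun i _ => (integrable_const (f i)).indicator (hmeas i)]
  refine sum_congr rfl fun i hi => ?_
  rw [integral_indicator_const _ (hmeas i), measureReal_def, hd.prob_eq t i hi, smul_eq_mul]

theorem sum_eq_one (hd : IsRandomDelay d J p μ) : ∑ j ∈ J, p j = 1 := by
  simpa using (hd.integral_comp (fun _ => 1) 0).symm

theorem integrable_comp_mul_comp (hd : IsRandomDelay d J p μ) (f g : ℤ → ℝ) (t s : ℤ) :
    Integrable (fun ω => f (d t ω) * g (d s ω)) μ := by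
  have hbound : ∀ (h : ℤ → ℝ) t ω, |h (d t ω)| ≤ ∑ i ∈ J, |h i| := fun h t ω =>
    single_le_sum (f := fun i => |h i|) (fun i _ => abs_nonneg _) (hd.mem t ω)
  refine Integrable.of_bound ((Measurable.of_discrete.comp (hd.measurable t)).mul
    (Measurable.of_discrete.comp (hd.measurable s))).aestronglyMeasurable
    ((∑ i ∈ J, |f i|) * ∑ i ∈ J, |g i|) (ae_of_all _ fun ω => ?_)
  rw [Real.norm_eq_abs, abs_mul]
  exact mul_le_mul (hbound f t ω) (hbound g s ω) (abs_nonneg _)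
    (sum_nonneg fun i _ => abs_nonneg _)

theorem integral_comp_mul_comp_of_ne (hd : IsRandomDelay d J p μ) (hdiid : iIndepFun d μ)
    {t s : ℤ} (hts : t ≠ s) (f g : ℤ → ℝ) :
    ∫ ω, f (d t ω) * g (d s ω) ∂μ = (∑ i ∈ J, p i * f i) * ∑ i ∈ J, p i * g i := by
  rw [← hd.integral_comp f t, ← hd.integral_comp g s]
  exact ((hdiid.indepFun hts).comp Measurable.of_discrete Measurable.of_discrete
    ).integral_fun_mul_eq_mul_integral
    (Measurable.of_discrete.comp (hd.measurable t)).aestronglyMeasurable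
    (Measurable.of_discrete.comp (hd.measurable s)).aestronglyMeasurable

theorem integral_sum_mul_sum (hd : IsRandomDelay d J p μ) (hy : IsWideSenseStationary y R μ)
    (hindep : IndepFun (fun ω t => d t ω) (fun ω t => y t ω) μ) (w v : ℤ → ℤ → ℝ) (t s : ℤ) :
    ∫ ω, (∑ j ∈ J, w j (d t ω) * y (t - j) ω) * (∑ l ∈ J, v l (d s ω) * y (s - l) ω) ∂μ
      = ∑ j ∈ J, ∑ l ∈ J, (∫ ω, w j (d t ω) * v l (d s ω) ∂μ) * R (t - s - j + l) :=
  hy.integral_sum_mul_sum hindep (a := fun j x => w j (x t)) (b := fun l x => v l (x s))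
    (fun _ => Measurable.of_discrete.comp (measurable_pi_apply t))
    (fun _ => Measurable.of_discrete.comp (measurable_pi_apply s))
    (fun j l => hd.integrable_comp_mul_comp (w j) (v l) t s) J J t s

theorem integral_sum_mul_sum_of_ne (hd : IsRandomDelay d J p μ) (hdiid : iIndepFun d μ)
    (hy : IsWideSenseStationary y R μ)
    (hindep : IndepFun (fun ω t => d t ω) (fun ω t => y t ω) μ)
    (w v : ℤ → ℤ → ℝ) {t s : ℤ} (hts : t ≠ s) :
    ∫ ω, (∑ j ∈ J, w j (d t ω) * y (t - j) ω) * (∑ l ∈ J, v l (d s ω) * y (s - l) ω) ∂μ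
      = ∑ j ∈ J, ∑ l ∈ J,
          ((∑ i ∈ J, p i * w j i) * ∑ i ∈ J, p i * v l i) * R (t - s - j + l) := by
  rw [hd.integral_sum_mul_sum hy hindep]
  simp only [hd.integral_comp_mul_comp_of_ne hdiid hts]

theorem integral_sum_mul_sum_self (hd : IsRandomDelay d J p μ) (hy : IsWideSenseStationary y R μ)
    (hindep : IndepFun (fun ω t => d t ω) (fun ω t => y t ω) μ) (w v : ℤ → ℤ → ℝ) (t : ℤ) :
    ∫ ω, (∑ j ∈ J, w j (d t ω) * y (t - j) ω) * (∑ l ∈ J, v l (d t ω) * y (t - l) ω) ∂μ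
      = ∑ j ∈ J, ∑ l ∈ J, (∑ i ∈ J, p i * (w j i * v l i)) * R (l - j) := by
  rw [hd.integral_sum_mul_sum hy hindep]
  refine sum_congr rfl fun j _ => sum_congr rfl fun l _ => ?_
  rw [hd.integral_comp (fun i => w j i * v l i), show t - t - j + l = l - j by ring]

end IsRandomDelay

open RandomDelay in
theorem stmt14_general {Ω : Type*} [MeasureSpace Ω] [IsProbabilityMeasure (volume : Measure Ω)]
    (y : ℤ → Ω → ℝ)
    (hyL2 : ∀ t, MemLp (y t) 2 volume)
    (R : ℤ → ℝ) (hWSS : ∀ t k : ℤ, ∫ ω, y (t + k) ω * y t ω = R k)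
    (d : ℤ → Ω → ℤ) (hdmeas : ∀ t, Measurable (d t))
    (J : Finset ℤ) (hdJ : ∀ t ω, d t ω ∈ J)
    (p : ℤ → ℝ) (hp : ∀ t, ∀ j ∈ J, (volume {ω | d t ω = j}).toReal = p j)
    (hdiid : iIndepFun d volume)
    (hindep : IndepFun (fun ω => fun t : ℤ => d t ω)
      (fun ω => fun t : ℤ => y t ω) volume)
    (u : ℤ → Ω → ℝ) (hu : ∀ t ω, u t ω = y (t - d t ω) ω)
    (ubar : ℤ → Ω → ℝ) (hubar : ∀ t ω, ubar t ω = ∑ j ∈ J, p j * y (t - j) ω)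
    (Δu : ℤ → Ω → ℝ) (hΔu : ∀ t ω, Δu t ω = u t ω - ubar t ω) :
    (∀ t s : ℤ, t ≠ s →
        ∫ ω, u t ω * u s ω = ∑ j ∈ J, ∑ l ∈ J, p j * p l * R (t - s - j + l)) ∧
    (∀ t : ℤ, ∫ ω, (u t ω) ^ 2 = R 0) ∧
    (∀ t s : ℤ, t ≠ s → ∫ ω, Δu t ω * Δu s ω = 0) ∧
    (∀ t : ℤ, ∫ ω, (Δu t ω) ^ 2 = R 0 - ∑ j ∈ J, ∑ l ∈ J, p j * p l * R (j - l)) := by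
  have hy : IsWideSenseStationary y R volume := ⟨hyL2, hWSS⟩
  have hd : IsRandomDelay d J p volume := ⟨hdmeas, hdJ, hp⟩
  have hpsum := hd.sum_eq_one
  have hu' : ∀ t ω, u t ω = ∑ j ∈ J, indicator j (d t ω) * y (t - j) ω := fun t ω => by
    simp [hu, indicator, hdJ t ω]
  have hΔu' : ∀ t ω, Δu t ω = ∑ j ∈ J, (indicator j (d t ω) - p j) * y (t - j) ω :=
    fun t ω => by simp only [hΔu, hu', hubar, sub_mul, sum_sub_distrib]
  refine ⟨fun t s hts => ?_, fun t => ?_, fun t s hts => ?_, fun t => ?_⟩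
  · simp_rw [hu']
    rw [hd.integral_sum_mul_sum_of_ne hdiid hy hindep _ _ hts]
    exact sum_congr rfl fun j hj => sum_congr rfl fun l hl => by
      rw [sum_mul_indicator hj, sum_mul_indicator hl]
  · simp_rw [sq, hu']
    rw [hd.integral_sum_mul_sum_self hy hindep, sum_sum_moment_mul hpsum]
  · simp_rw [hΔu']
    rw [hd.integral_sum_mul_sum_of_ne hdiid hy hindep (fun j i => indicator j i - p j)
      (fun j i => indicator j i - p j) hts]
    exact sum_eq_zero fun j hj => sum_eq_zero fun l _ => by
      rw [sum_mul_indicator_sub_self hpsum hj, zero_mul, zero_mul]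
  · simp_rw [sq, hΔu']
    rw [hd.integral_sum_mul_sum_self hy hindep (fun j i => indicator j i - p j)
      (fun j i => indicator j i - p j), sum_sum_centered_moment_mul hpsum]

/-- autocorrelation and perturbation-noise computations for the random
delay corruption model. With mutually independent delays `(d t)`, independent of the
whole process `y`, and `u t ω = y (t - d t ω) ω`, `ū t = Σ_{j∈J} p j · y (t-j)`,
`Δu t = u t − ū t`:
(i) `E[u t · u s] = Σ_{j,l∈J} p j · p l · R (t − s − j + l)` for `t ≠ s`, and
`E[(u t)²] = R 0`;
(ii) `E[Δu t · Δu s] = 0` for `t ≠ s`;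
(iii) `E[(Δu t)²] = R 0 − Σ_{j,l∈J} p j · p l · R (j − l)`. -/
theorem stmt14 {Ω : Type*} [MeasureSpace Ω] [IsProbabilityMeasure (volume : Measure Ω)]
    (y : ℤ → Ω → ℝ) (hymeas : ∀ t, Measurable (y t))
    (hyL2 : ∀ t, MemLp (y t) 2 volume)
    (R : ℤ → ℝ) (hWSS : ∀ t k : ℤ, ∫ ω, y (t + k) ω * y t ω = R k)
    (d : ℤ → Ω → ℤ) (hdmeas : ∀ t, Measurable (d t))
    (J : Finset ℤ) (hdJ : ∀ t ω, d t ω ∈ J)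
    (p : ℤ → ℝ) (hp : ∀ t, ∀ j ∈ J, (volume {ω | d t ω = j}).toReal = p j)
    (hdiid : iIndepFun d volume)
    (hindep : IndepFun (fun ω => fun t : ℤ => d t ω)
      (fun ω => fun t : ℤ => y t ω) volume)
    (u : ℤ → Ω → ℝ) (hu : ∀ t ω, u t ω = y (t - d t ω) ω)
    (ubar : ℤ → Ω → ℝ) (hubar : ∀ t ω, ubar t ω = ∑ j ∈ J, p j * y (t - j) ω)
    (Δu : ℤ → Ω → ℝ) (hΔu : ∀ t ω, Δu t ω = u t ω - ubar t ω) :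
    (∀ t s : ℤ, t ≠ s →
        ∫ ω, u t ω * u s ω = ∑ j ∈ J, ∑ l ∈ J, p j * p l * R (t - s - j + l)) ∧
    (∀ t : ℤ, ∫ ω, (u t ω) ^ 2 = R 0) ∧
    (∀ t s : ℤ, t ≠ s → ∫ ω, Δu t ω * Δu s ω = 0) ∧
    (∀ t : ℤ, ∫ ω, (Δu t ω) ^ 2 = R 0 - ∑ j ∈ J, ∑ l ∈ J, p j * p l * R (j - l)) :=
  stmt14_general y hyL2 R hWSS d hdmeas J hdJ p hp hdiid hindep u hu ubar hubar Δu hΔu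
end

section
/- Let (Ω, P) be a probability space, let y : ℤ → Ω → ℝ be a wide-sense stationary process with autocorrelation R : ℤ → ℝ, and let (B_t)_{t∈ℤ} be mutually independent Bernoulli random variables with success probability p ∈ (0,1], independent of the process y. Suppose u : ℤ → Ω → ℝ is a process with each u_t square-integrable, satisfying almost surely u_t = y_t on the event {B_t = 1} and u_t = u_{t−1} on the event {B_t = 0}, and such that for each t, almost surely u_t = y_{t − τ_t} where τ_t = min{k ≥ 0 : B_{t−k} = 1}. Assume Σ_{k≥0} (1−p)^k |R(k)| < ∞. Then for every t ∈ ℤ, E[u_t · u_0] = (1−p)^{|t|} · R(0) + Σ_{j=1}^{|t|} Σ_{k=j}^{∞} p² · (1−p)^{|t|+k−2j} · R(k), where the double sum is interpreted as 0 when t = 0. (This is the packet-drop autocorrelation formula, equation (18) of the paper.) -/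
/-!
Write `X ω = (B t ω)ₜ` for the pattern of received packets. Almost surely (as `p > 0`) some
packet has arrived by any time `s`, and then the age `τ s` is the unique `k` with
`X ω ∈ ageSet s k`; on that event `u s = y (s - k)`. Partition `Ω` by the age `a` at time
`t₀ + n`. If `a < n`, the last packet before `t₀ + n` arrived after `t₀`; conditioning further
on the age `b` at `t₀` involves two disjoint windows of independent trials, so the event has
probability `p (1 - p)^a · p (1 - p)^b`, and since `B` is independent of `y` the integral of
`u (t₀ + n) * u t₀` over it is that probability times `R (n - a + b)`. If `a ≥ n`, then
`a = n + b` with `b` the age at `t₀`, both factors are `y (t₀ - b)`, and the contributions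
`p (1 - p)^(n + b) R 0` sum geometrically to `(1 - p)^n R 0`. Negative `t` follow by swapping
the factors.
-/

open MeasureTheory ProbabilityTheory Function

section BoolCylinder

variable {ι : Type*}

def boolCylinder (S : Finset ι) (v : ι → Bool) : Set (ι → Bool) := {w | ∀ i ∈ S, w i = v i}

lemma measurableSet_boolCylinder (S : Finset ι) (v : ι → Bool) :
    MeasurableSet (boolCylinder S v) := by
  simp only [boolCylinder, Set.ofPred_forall]
  exact Finset.measurableSet_biInter S fun i _ =>
    measurableSet_eq_fun (measurable_pi_apply i) measurable_const

lemma boolCylinder_inter_of_disjoint [DecidableEq ι] {S T : Finset ι} (hST : Disjoint S T)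
    (v v' : ι → Bool) :
    boolCylinder S v ∩ boolCylinder T v' =
      boolCylinder (S ∪ T) (fun i => if i ∈ S then v i else v' i) := by
  ext w
  simp only [boolCylinder, Set.mem_inter_iff, Set.mem_ofPred_eq, Finset.mem_union]
  constructor
  · rintro ⟨hS, hT⟩ i (hi | hi)
    · simp [hi, hS i hi]
    · simp [Finset.disjoint_right.1 hST hi, hT i hi]
  · intro h
    exact ⟨fun i hi => by simpa [hi] using h i (.inl hi),
      fun i hi => by simpa [Finset.disjoint_right.1 hST hi] using h i (.inr hi)⟩

end BoolCylinder

section Bernoulli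

variable {Ω ι : Type*} [MeasurableSpace Ω] {μ : Measure Ω} [IsProbabilityMeasure μ]
  {B : ι → Ω → Bool} {p : ℝ}

lemma measureReal_eq_false_of_eq_true {i : ι} (hB : Measurable (B i))
    (hp : μ.real {ω | B i ω = true} = p) : μ.real {ω | B i ω = false} = 1 - p := by
  have hcompl : {ω | B i ω = false} = {ω | B i ω = true}ᶜ := by ext; simp
  have hm : MeasurableSet {ω | B i ω = true} := hB (measurableSet_singleton true)
  rw [hcompl, measureReal_compl hm, probReal_univ, hp]

lemma ProbabilityTheory.iIndepFun.measureReal_preimage_boolCylinder (hind : iIndepFun B μ)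
    (hB : ∀ i, Measurable (B i)) (hp : ∀ i, μ.real {ω | B i ω = true} = p)
    (S : Finset ι) (v : ι → Bool) :
    μ.real ((fun ω i => B i ω) ⁻¹' boolCylinder S v) = ∏ i ∈ S, if v i then p else 1 - p := by
  have hpre : (fun ω i => B i ω) ⁻¹' boolCylinder S v = ⋂ i ∈ S, B i ⁻¹' {v i} := by
    ext ω; simp [boolCylinder]
  rw [hpre, measureReal_def, hind.meas_biInter fun i _ => ⟨{v i}, measurableSet_singleton _, rfl⟩,
    ENNReal.toReal_prod]
  refine Finset.prod_congr rfl fun i _ => ?_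
  cases v i
  · exact measureReal_eq_false_of_eq_true (hB i) (hp i)
  · exact hp i

lemma ProbabilityTheory.iIndepFun.measureReal_preimage_boolCylinder_inter [DecidableEq ι]
    (hind : iIndepFun B μ) (hB : ∀ i, Measurable (B i)) (hp : ∀ i, μ.real {ω | B i ω = true} = p)
    {S T : Finset ι} (hST : Disjoint S T) (v v' : ι → Bool) :
    μ.real ((fun ω i => B i ω) ⁻¹' (boolCylinder S v ∩ boolCylinder T v')) =
      μ.real ((fun ω i => B i ω) ⁻¹' boolCylinder S v) *
        μ.real ((fun ω i => B i ω) ⁻¹' boolCylinder T v') := by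
  simp only [boolCylinder_inter_of_disjoint hST, hind.measureReal_preimage_boolCylinder hB hp,
    Finset.prod_union hST]
  congr 1 <;> refine Finset.prod_congr rfl fun i hi => ?_
  · rw [if_pos hi]
  · rw [if_neg (Finset.disjoint_right.1 hST hi)]

end Bernoulli

def ageSet (s : ℤ) (k : ℕ) : Set (ℤ → Bool) := {w | w (s - k) = true ∧ ∀ i < k, w (s - i) = false}

section AgeSet

variable {w : ℤ → Bool} {s : ℤ} {k : ℕ}

lemma sInf_eq_of_mem_ageSet (hw : w ∈ ageSet s k) : sInf {i : ℕ | w (s - i) = true} = k :=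
  IsLeast.csInf_eq ⟨hw.1, fun i hi => not_lt.1 fun hik => by simp [hw.2 i hik] at hi⟩

lemma exists_mem_ageSet (h : w (s - k) = true) : ∃ a, w ∈ ageSet s a := by
  classical
  have hex : ∃ i : ℕ, w (s - i) = true := ⟨k, h⟩
  exact ⟨Nat.find hex, Nat.find_spec hex, fun i hi => by simpa using Nat.find_min hex hi⟩

lemma pairwise_disjoint_ageSet (s : ℤ) : Pairwise (Disjoint on ageSet s) := by
  have hlt : ∀ {a b : ℕ}, a < b → Disjoint (ageSet s a) (ageSet s b) := fun hab =>
    Set.disjoint_left.2 fun _ ha hb => absurd (hb.2 _ hab) (by simp [ha.1])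
  intro a b hab
  rcases hab.lt_or_gt with h | h
  exacts [hlt h, (hlt h).symm]

lemma ageSet_add_subset (s : ℤ) (n b : ℕ) : ageSet (s + n) (n + b) ⊆ ageSet s b := by
  rintro w ⟨hlast, hnone⟩
  refine ⟨by rwa [show s + n - ((n + b : ℕ) : ℤ) = s - b by push_cast; ring] at hlast,
    fun i hi => ?_⟩
  have := hnone (n + i) (by omega)
  rwa [show s + n - ((n + i : ℕ) : ℤ) = s - i by push_cast; ring] at this

lemma ageSet_eq_boolCylinder (s : ℤ) (k : ℕ) :
    ageSet s k = boolCylinder (Finset.Icc (s - k) s) (fun i => decide (i = s - k)) := by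
  ext w
  simp only [ageSet, boolCylinder, Set.mem_ofPred_eq, Finset.mem_Icc]
  constructor
  · rintro ⟨hlast, hnone⟩ i ⟨hi1, hi2⟩
    by_cases hi : i = s - k
    · simp [hi, hlast]
    · have := hnone (s - i).toNat (by omega)
      rw [show s - ((s - i).toNat : ℤ) = i by omega] at this
      simp [hi, this]
  · intro h
    exact ⟨by simpa using h (s - k) ⟨le_rfl, by omega⟩,
      fun i hi => by
        simpa [show ¬s - (i : ℤ) = s - k by omega] using h (s - i) ⟨by omega, by omega⟩⟩

lemma measurableSet_ageSet (s : ℤ) (k : ℕ) : MeasurableSet (ageSet s k) := by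
  rw [ageSet_eq_boolCylinder]
  exact measurableSet_boolCylinder _ _

end AgeSet

lemma hasSum_integral_of_ae_exists_mem {Ω ι : Type*} [MeasurableSpace Ω] [Countable ι]
    {ν : Measure Ω} {E : ι → Set Ω} (hE : ∀ k, MeasurableSet (E k))
    (hd : Pairwise (Disjoint on E)) (hcov : ∀ᵐ ω ∂ν, ∃ k, ω ∈ E k) {f : Ω → ℝ}
    (hf : Integrable f ν) : HasSum (fun k => ∫ ω in E k, f ω ∂ν) (∫ ω, f ω ∂ν) := by
  have hU : (⋃ k, E k) =ᵐ[ν] (Set.univ : Set Ω) :=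
    Filter.eventuallyEq_set.2 (by filter_upwards [hcov] with ω hω; simpa using hω)
  simpa [setIntegral_congr_set hU] using hasSum_integral_iUnion hE hd hf.integrableOn

section BernoulliAge

variable {Ω : Type*} [MeasurableSpace Ω] {μ : Measure Ω} [IsProbabilityMeasure μ]
  {B : ℤ → Ω → Bool} {p : ℝ}

lemma ProbabilityTheory.iIndepFun.measureReal_preimage_ageSet (hind : iIndepFun B μ)
    (hB : ∀ i, Measurable (B i)) (hp : ∀ i, μ.real {ω | B i ω = true} = p) (s : ℤ) (k : ℕ) :
    μ.real ((fun ω i => B i ω) ⁻¹' ageSet s k) = p * (1 - p) ^ k := by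
  rw [ageSet_eq_boolCylinder, hind.measureReal_preimage_boolCylinder hB hp,
    Finset.Icc_eq_cons_Ioc (by omega), Finset.prod_cons, decide_eq_true rfl, if_pos rfl,
    Finset.prod_congr rfl fun i hi => if_neg (by simp at hi ⊢; omega), Finset.prod_const,
    Int.card_Ioc, show (s - (s - k)).toNat = k by omega]

lemma ProbabilityTheory.iIndepFun.measureReal_preimage_ageSet_inter (hind : iIndepFun B μ)
    (hB : ∀ i, Measurable (B i)) (hp : ∀ i, μ.real {ω | B i ω = true} = p) (s : ℤ)
    {n a : ℕ} (ha : a < n) (b : ℕ) :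
    μ.real ((fun ω i => B i ω) ⁻¹' (ageSet (s + n) a ∩ ageSet s b)) =
      p * (1 - p) ^ a * (p * (1 - p) ^ b) := by
  have hdisj : Disjoint (Finset.Icc (s + n - a) (s + n)) (Finset.Icc (s - b) s) :=
    Finset.disjoint_left.2 fun i hi hi' => by simp only [Finset.mem_Icc] at hi hi'; omega
  rw [ageSet_eq_boolCylinder, ageSet_eq_boolCylinder,
    hind.measureReal_preimage_boolCylinder_inter hB hp hdisj, ← ageSet_eq_boolCylinder,
    ← ageSet_eq_boolCylinder, hind.measureReal_preimage_ageSet hB hp,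
    hind.measureReal_preimage_ageSet hB hp]

lemma ProbabilityTheory.iIndepFun.ae_exists_mem_ageSet (hind : iIndepFun B μ)
    (hB : ∀ i, Measurable (B i)) (hp : ∀ i, μ.real {ω | B i ω = true} = p) (hp0 : 0 < p)
    (s : ℤ) : ∀ᵐ ω ∂μ, ∃ k, (fun i => B i ω) ∈ ageSet s k := by
  have hp1 : p ≤ 1 := hp s ▸ measureReal_le_one
  set N := {ω | ∀ k : ℕ, B (s - k) ω = false}
  have hN_le : ∀ m : ℕ, μ.real N ≤ (1 - p) ^ (m + 1) := by
    intro m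
    have hsub : N ⊆ (fun ω i => B i ω) ⁻¹' boolCylinder (Finset.Icc (s - m) s) fun _ => false := by
      intro ω hω i hi
      simp only [Finset.mem_Icc] at hi
      have := hω (s - i).toNat
      rwa [show s - ((s - i).toNat : ℤ) = i by omega] at this
    refine (measureReal_mono hsub).trans_eq ?_
    rw [hind.measureReal_preimage_boolCylinder hB hp, Finset.prod_const, Int.card_Icc,
      show (s + 1 - (s - m)).toNat = m + 1 by omega, if_neg Bool.false_ne_true]
  have hN : μ N = 0 := by
    have hlim : Filter.Tendsto (fun m : ℕ => (1 - p) ^ (m + 1)) Filter.atTop (nhds 0) :=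
      (tendsto_pow_atTop_nhds_zero_of_lt_one (by linarith) (by linarith)).comp
        (Filter.tendsto_add_atTop_nat 1)
    exact (measureReal_eq_zero_iff).1 (le_antisymm (ge_of_tendsto' hlim hN_le) measureReal_nonneg)
  filter_upwards [measure_eq_zero_iff_ae_notMem.1 hN] with ω hω
  simp only [N, Set.mem_ofPred_eq, not_forall, Bool.not_eq_false] at hω
  obtain ⟨k, hk⟩ := hω
  exact exists_mem_ageSet hk

lemma ProbabilityTheory.iIndepFun.hasSum_setIntegral_preimage_ageSet (hind : iIndepFun B μ)
    (hB : ∀ i, Measurable (B i)) (hp : ∀ i, μ.real {ω | B i ω = true} = p) (hp0 : 0 < p)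
    (s : ℤ) {ν : Measure Ω} (hν : ν ≪ μ) {f : Ω → ℝ} (hf : Integrable f ν) :
    HasSum (fun k => ∫ ω in (fun ω i => B i ω) ⁻¹' ageSet s k, f ω ∂ν) (∫ ω, f ω ∂ν) :=
  hasSum_integral_of_ae_exists_mem
    (fun k => measurable_pi_lambda _ hB (measurableSet_ageSet s k))
    ((pairwise_disjoint_ageSet s).mono fun _ _ h => h.preimage _)
    (hν.ae_le (hind.ae_exists_mem_ageSet hB hp hp0 s)) hf

end BernoulliAge

lemma Finset.sum_range_eq_sum_Icc_sub {M : Type*} [AddCommMonoid M] (g : ℕ → M) (n : ℕ) :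
    ∑ a ∈ Finset.range n, g a = ∑ j ∈ Finset.Icc 1 n, g (n - j) := by
  refine Finset.sum_nbij' (fun a => n - a) (fun j => n - j) ?_ ?_ ?_ ?_ ?_ <;>
    intro a ha <;> simp only [Finset.mem_range, Finset.mem_Icc] at ha ⊢
  all_goals first | omega | rw [Nat.sub_sub_self ha.le]

section PacketDrop

variable {Ω : Type*} [MeasurableSpace Ω] {μ : Measure Ω}
  {y u : ℤ → Ω → ℝ} {R : ℤ → ℝ} {B : ℤ → Ω → Bool} {τ : ℤ → Ω → ℕ} {p : ℝ}

lemma setIntegral_mul_eq_of_subset_ageSet (hymeas : ∀ t, Measurable (y t))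
    (hWSS : ∀ t k : ℤ, ∫ ω, y (t + k) ω * y t ω ∂μ = R k) (hBmeas : ∀ t, Measurable (B t))
    (hBy : IndepFun (fun ω t => B t ω) (fun ω t => y t ω) μ)
    (hτ : ∀ t ω, τ t ω = sInf {k : ℕ | B (t - (k : ℤ)) ω = true})
    (hlast : ∀ t : ℤ, ∀ᵐ ω ∂μ, u t ω = y (t - (τ t ω : ℤ)) ω)
    {F : Set (ℤ → Bool)} (hF : MeasurableSet F) {s s' : ℤ} {a b : ℕ}
    (hFsub : F ⊆ ageSet s a ∩ ageSet s' b) :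
    ∫ ω in (fun ω t => B t ω) ⁻¹' F, u s ω * u s' ω ∂μ =
      μ.real ((fun ω t => B t ω) ⁻¹' F) * R (s - a - (s' - b)) := by
  have hX : Measurable fun ω t => B t ω := measurable_pi_lambda _ hBmeas
  have hY : Measurable fun ω t => y t ω := measurable_pi_lambda _ hymeas
  calc ∫ ω in (fun ω t => B t ω) ⁻¹' F, u s ω * u s' ω ∂μ
      = ∫ ω in (fun ω t => B t ω) ⁻¹' F, y (s - a) ω * y (s' - b) ω ∂μ := by
        refine setIntegral_congr_ae (hX hF) ?_
        filter_upwards [hlast s, hlast s'] with ω hs hs' hω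
        rw [hs, hs', hτ, hτ, sInf_eq_of_mem_ageSet (hFsub hω).1,
          sInf_eq_of_mem_ageSet (hFsub hω).2]
    _ = μ.real ((fun ω t => B t ω) ⁻¹' F) * ∫ ω, y (s - a) ω * y (s' - b) ω ∂μ :=
        ((IndepFun_iff_Indep _ _ _).1 hBy).setIntegral_eq_mul (f := fun v => v (s - a) * v (s' - b))
          hX.comap_le hY.aemeasurable ⟨F, hF, rfl⟩ (by fun_prop)
    _ = μ.real ((fun ω t => B t ω) ⁻¹' F) * R (s - a - (s' - b)) := by
        rw [← hWSS (s' - b), add_sub_cancel]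

lemma setIntegral_mul_preimage_ageSet_sub [IsProbabilityMeasure μ] (hymeas : ∀ t, Measurable (y t))
    (hWSS : ∀ t k : ℤ, ∫ ω, y (t + k) ω * y t ω ∂μ = R k) (hp0 : 0 < p)
    (hBmeas : ∀ t, Measurable (B t)) (hBp : ∀ t, μ.real {ω | B t ω = true} = p)
    (hBiid : iIndepFun B μ) (hBy : IndepFun (fun ω t => B t ω) (fun ω t => y t ω) μ)
    (huL2 : ∀ t, MemLp (u t) 2 μ)
    (hτ : ∀ t ω, τ t ω = sInf {k : ℕ | B (t - (k : ℤ)) ω = true})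
    (hlast : ∀ t : ℤ, ∀ᵐ ω ∂μ, u t ω = y (t - (τ t ω : ℤ)) ω) (t₀ : ℤ) {n j : ℕ}
    (hj : 1 ≤ j) (hjn : j ≤ n) :
    ∫ ω in (fun ω t => B t ω) ⁻¹' ageSet (t₀ + n) (n - j), u (t₀ + n) ω * u t₀ ω ∂μ =
      ∑' k : ℕ, p ^ 2 * (1 - p) ^ (n - j + k) * R ((j : ℤ) + (k : ℤ)) := by
  have hX : Measurable fun ω t => B t ω := measurable_pi_lambda _ hBmeas
  have hint : Integrable (fun ω => u (t₀ + n) ω * u t₀ ω) μ := (huL2 _).integrable_mul (huL2 _)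
  refine (HasSum.tsum_eq ?_).symm
  convert hBiid.hasSum_setIntegral_preimage_ageSet hBmeas hBp hp0 t₀
    Measure.absolutelyContinuous_restrict hint.restrict using 2 with k
  rw [Measure.restrict_restrict (hX (measurableSet_ageSet _ _)), ← Set.preimage_inter,
    Set.inter_comm, setIntegral_mul_eq_of_subset_ageSet hymeas hWSS hBmeas hBy hτ hlast
      ((measurableSet_ageSet _ _).inter (measurableSet_ageSet _ _)) subset_rfl,
    hBiid.measureReal_preimage_ageSet_inter hBmeas hBp t₀ (by omega) k,
    show t₀ + n - ((n - j : ℕ) : ℤ) - (t₀ - k) = j + k by push_cast [Nat.cast_sub hjn]; ring]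
  ring

lemma setIntegral_mul_preimage_ageSet_add [IsProbabilityMeasure μ] (hymeas : ∀ t, Measurable (y t))
    (hWSS : ∀ t k : ℤ, ∫ ω, y (t + k) ω * y t ω ∂μ = R k)
    (hBmeas : ∀ t, Measurable (B t)) (hBp : ∀ t, μ.real {ω | B t ω = true} = p)
    (hBiid : iIndepFun B μ) (hBy : IndepFun (fun ω t => B t ω) (fun ω t => y t ω) μ)
    (hτ : ∀ t ω, τ t ω = sInf {k : ℕ | B (t - (k : ℤ)) ω = true})
    (hlast : ∀ t : ℤ, ∀ᵐ ω ∂μ, u t ω = y (t - (τ t ω : ℤ)) ω) (t₀ : ℤ) (n b : ℕ) :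
    ∫ ω in (fun ω t => B t ω) ⁻¹' ageSet (t₀ + n) (b + n), u (t₀ + n) ω * u t₀ ω ∂μ =
      p * (1 - p) ^ n * R 0 * (1 - p) ^ b := by
  rw [add_comm b, setIntegral_mul_eq_of_subset_ageSet hymeas hWSS hBmeas hBy hτ hlast
      (measurableSet_ageSet _ _) (Set.subset_inter subset_rfl (ageSet_add_subset t₀ n b)),
    hBiid.measureReal_preimage_ageSet hBmeas hBp,
    show t₀ + n - ((n + b : ℕ) : ℤ) - (t₀ - b) = 0 by push_cast; ring, pow_add]
  ring

lemma integral_mul_add_nat [IsProbabilityMeasure μ] (hymeas : ∀ t, Measurable (y t))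
    (hWSS : ∀ t k : ℤ, ∫ ω, y (t + k) ω * y t ω ∂μ = R k) (hp0 : 0 < p)
    (hBmeas : ∀ t, Measurable (B t)) (hBp : ∀ t, μ.real {ω | B t ω = true} = p)
    (hBiid : iIndepFun B μ) (hBy : IndepFun (fun ω t => B t ω) (fun ω t => y t ω) μ)
    (huL2 : ∀ t, MemLp (u t) 2 μ)
    (hτ : ∀ t ω, τ t ω = sInf {k : ℕ | B (t - (k : ℤ)) ω = true})
    (hlast : ∀ t : ℤ, ∀ᵐ ω ∂μ, u t ω = y (t - (τ t ω : ℤ)) ω) (t₀ : ℤ) (n : ℕ) :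
    ∫ ω, u (t₀ + n) ω * u t₀ ω ∂μ =
      (1 - p) ^ n * R 0 +
        ∑ j ∈ Finset.Icc 1 n, ∑' k : ℕ, p ^ 2 * (1 - p) ^ (n - j + k) * R ((j : ℤ) + (k : ℤ)) := by
  have hp1 : p ≤ 1 := hBp 0 ▸ measureReal_le_one
  have hint : Integrable (fun ω => u (t₀ + n) ω * u t₀ ω) μ := (huL2 _).integrable_mul (huL2 _)
  have hages := hBiid.hasSum_setIntegral_preimage_ageSet hBmeas hBp hp0 (t₀ + n)
    Measure.AbsolutelyContinuous.rfl hint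
  rw [← hasSum_nat_add_iff' n] at hages
  simp_rw [setIntegral_mul_preimage_ageSet_add hymeas hWSS hBmeas hBp hBiid hBy hτ hlast] at hages
  have hgeom : HasSum (fun b : ℕ => p * (1 - p) ^ n * R 0 * (1 - p) ^ b) ((1 - p) ^ n * R 0) := by
    have := (hasSum_geometric_of_lt_one (r := 1 - p) (by linarith) (by linarith)).mul_left
      (p * (1 - p) ^ n * R 0)
    rwa [sub_sub_cancel, show p * (1 - p) ^ n * R 0 * p⁻¹ = (1 - p) ^ n * R 0 by field_simp] at this
  rw [← hages.unique hgeom, Finset.sum_range_eq_sum_Icc_sub,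
    Finset.sum_congr rfl fun j hj => setIntegral_mul_preimage_ageSet_sub hymeas hWSS hp0 hBmeas
      hBp hBiid hBy huL2 hτ hlast t₀ (Finset.mem_Icc.1 hj).1 (Finset.mem_Icc.1 hj).2,
    sub_add_cancel]

end PacketDrop

theorem stmt15_general {Ω : Type*} [MeasureSpace Ω] [IsProbabilityMeasure (volume : Measure Ω)]
    (y : ℤ → Ω → ℝ) (hymeas : ∀ t, Measurable (y t))
    (R : ℤ → ℝ) (hWSS : ∀ t k : ℤ, ∫ ω, y (t + k) ω * y t ω = R k)
    (p : ℝ) (hp0 : 0 < p)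
    (B : ℤ → Ω → Bool) (hBmeas : ∀ t, Measurable (B t))
    (hBp : ∀ t, (volume {ω | B t ω = true}).toReal = p)
    (hBiid : iIndepFun B volume)
    (hBy : IndepFun (fun ω => fun t : ℤ => B t ω)
      (fun ω => fun t : ℤ => y t ω) volume)
    (u : ℤ → Ω → ℝ)
    (huL2 : ∀ t, MemLp (u t) 2 volume)
    (τ : ℤ → Ω → ℕ) (hτ : ∀ t ω, τ t ω = sInf {k : ℕ | B (t - (k : ℤ)) ω = true})
    (hlast : ∀ t : ℤ, ∀ᵐ ω ∂volume, u t ω = y (t - (τ t ω : ℤ)) ω) :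
    ∀ t : ℤ, ∫ ω, u t ω * u 0 ω =
      (1 - p) ^ t.natAbs * R 0 +
        ∑ j ∈ Finset.Icc 1 t.natAbs,
          ∑' k : ℕ, p ^ 2 * (1 - p) ^ (t.natAbs - j + k) * R ((j : ℤ) + (k : ℤ)) := by
  intro t
  have key := integral_mul_add_nat hymeas hWSS hp0 hBmeas hBp hBiid hBy huL2 hτ hlast
  rcases le_or_gt 0 t with ht | ht
  · simpa [Int.natAbs_of_nonneg ht] using key 0 t.natAbs
  · have h := key t t.natAbs
    rw [show t + (t.natAbs : ℤ) = 0 by omega] at h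
    rw [← h]
    congr 1 with ω
    ring

/-- packet-drop autocorrelation, equation (18): with i.i.d.
Bernoulli(`p`) variables `B t` independent of the WSS process `y`, and
`u t = y t` when `B t = true`, `u t = u (t-1)` when `B t = false`, so that
`u t = y (t - τ t)` with `τ t = min {k ≥ 0 : B (t-k) = true}`, one has
`E[u t · u 0] = (1-p)^{|t|} R 0 + Σ_{j=1}^{|t|} Σ_{k=j}^{∞} p² (1-p)^{|t|+k-2j} R k`
(the inner sum over `k ≥ j` is reindexed by `k = j + k'`, `k' : ℕ`, so the exponent
`|t|+k-2j` becomes `|t|-j+k'`); the double sum is `0` when `t = 0`. -/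
theorem stmt15 {Ω : Type*} [MeasureSpace Ω] [IsProbabilityMeasure (volume : Measure Ω)]
    (y : ℤ → Ω → ℝ) (hymeas : ∀ t, Measurable (y t))
    (hyL2 : ∀ t, MemLp (y t) 2 volume)
    (R : ℤ → ℝ) (hWSS : ∀ t k : ℤ, ∫ ω, y (t + k) ω * y t ω = R k)
    (p : ℝ) (hp0 : 0 < p) (hp1 : p ≤ 1)
    (B : ℤ → Ω → Bool) (hBmeas : ∀ t, Measurable (B t))
    (hBp : ∀ t, (volume {ω | B t ω = true}).toReal = p)
    (hBiid : iIndepFun B volume)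
    (hBy : IndepFun (fun ω => fun t : ℤ => B t ω)
      (fun ω => fun t : ℤ => y t ω) volume)
    (u : ℤ → Ω → ℝ) (humeas : ∀ t, Measurable (u t))
    (huL2 : ∀ t, MemLp (u t) 2 volume)
    (hrecur : ∀ t : ℤ, ∀ᵐ ω ∂volume,
      (B t ω = true → u t ω = y t ω) ∧ (B t ω = false → u t ω = u (t - 1) ω))
    (τ : ℤ → Ω → ℕ) (hτ : ∀ t ω, τ t ω = sInf {k : ℕ | B (t - (k : ℤ)) ω = true})
    (hlast : ∀ t : ℤ, ∀ᵐ ω ∂volume, u t ω = y (t - (τ t ω : ℤ)) ω)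
    (hsum : Summable fun k : ℕ => (1 - p) ^ k * |R (k : ℤ)|) :
    ∀ t : ℤ, ∫ ω, u t ω * u 0 ω =
      (1 - p) ^ t.natAbs * R 0 +
        ∑ j ∈ Finset.Icc 1 t.natAbs,
          ∑' k : ℕ, p ^ 2 * (1 - p) ^ (t.natAbs - j + k) * R ((j : ℤ) + (k : ℤ)) :=
  stmt15_general y hymeas R hWSS p hp0 B hBmeas hBp hBiid hBy u huL2 τ hτ hlast
end

section
/- Let p ∈ (0,1], define h : ℕ → ℝ by h(k) = p·(1−p)^k, and let R : ℤ → ℝ be an even function (R(−k) = R(k)) satisfying Σ_{k∈ℤ} (1−p)^{|k|} |R(k)| < ∞ (so that all series below converge absolutely). Then for every t ∈ ℤ, the double convolution Σ_{m≥0} Σ_{n≥0} h(m) · h(n) · R(t − m + n) equals Σ_{j=−∞}^{|t|} Σ_{k=j}^{∞} p² · (1−p)^{|t|+k−2j} · R(k). (This is the deterministic series identity (17) of the paper, computing (h ⋆ R_{yy} ⋆ h*)[t] for the packet-drop impulse response H(z) = p/(1 − z⁻¹(1−p)).) -/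
/-!
Writing `q = 1 - p`, we have `h m * h n = p² q^(m+n)`, so the right-hand side is the
left-hand side at `|t|` instead of `t`. It therefore suffices that the double convolution
`F t = Σ_{m,n} h m h n R (t - m + n)` is even. Since `R` is even,
`F (-t) = Σ_{m,n} h m h n R (t - n + m)`, which is `F t` after exchanging the two sums;
the exchange is legitimate because `q^(m+n) = q^(2 min(m,n)) q^|k - t|` with
`k = t - m + n`, and `(min(m,n), k)` determines `(m, n)`, so the double series is
dominated by a geometric series times `Σ_k q^|k - t| |R k| < ∞`.
-/

noncomputable def doubleConv (h : ℕ → ℝ) (R : ℤ → ℝ) (t : ℤ) : ℝ :=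
  ∑' m : ℕ, ∑' n : ℕ, h m * h n * R (t - m + n)

theorem doubleConv_neg {h : ℕ → ℝ} {R : ℤ → ℝ} (hR : ∀ k, R (-k) = R k) {t : ℤ}
    (ht : Summable fun x : ℕ × ℕ => h x.1 * h x.2 * R (t - x.1 + x.2)) :
    doubleConv h R (-t) = doubleConv h R t := by
  have hswap : ∀ m n : ℕ, h m * h n * R (-t - m + n) = h n * h m * R (t - n + m) := by
    intro m n
    rw [← hR (t - n + m), mul_comm (h m)]
    ring_nf
  simp only [doubleConv, hswap]
  exact ht.tsum_comm

section Geometric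

variable {q : ℝ} (hq0 : 0 ≤ q) (hq1 : q < 1) {R : ℤ → ℝ}
  (hR : Summable fun k : ℤ => q ^ k.natAbs * |R k|)
include hq0 hq1 hR

theorem summable_pow_natAbs_sub_mul_abs (s : ℤ) :
    Summable fun k : ℤ => q ^ (k - s).natAbs * |R k| := by
  rcases hq0.eq_or_lt with rfl | hq_pos
  · refine summable_of_ne_finset_zero (s := {s}) fun k hk => ?_
    have hks : (k - s).natAbs ≠ 0 := by simp_all [sub_eq_zero]
    simp [hks]
  · rw [← summable_mul_left_iff (pow_ne_zero s.natAbs hq_pos.ne')]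
    refine hR.of_nonneg_of_le (fun k => by positivity) fun k => ?_
    rw [← mul_assoc, ← pow_add]
    exact mul_le_mul_of_nonneg_right (pow_le_pow_of_le_one hq0 hq1.le (by omega)) (abs_nonneg _)

theorem summable_pow_add_mul_abs_sub_add (s : ℤ) :
    Summable fun x : ℕ × ℕ => q ^ (x.1 + x.2) * |R (s - x.1 + x.2)| := by
  have hgeom : Summable fun j : ℕ => (q ^ 2) ^ j :=
    summable_geometric_of_lt_one (by positivity) (by nlinarith)
  have hdom := hgeom.mul_of_nonneg (summable_pow_natAbs_sub_mul_abs hq0 hq1 hR s)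
    (fun _ => by positivity) (fun _ => by positivity)
  have hinj : Function.Injective fun x : ℕ × ℕ => (min x.1 x.2, s - x.1 + x.2) := by
    intro a b hab
    simp only [Prod.mk.injEq] at hab
    ext <;> omega
  refine (hdom.comp_injective hinj).congr fun x => ?_
  simp only [Function.comp_apply, ← pow_mul, ← mul_assoc, ← pow_add]
  congr 2
  omega

end Geometric

/-- deterministic series identity (17): for `p ∈ (0,1]`,
`h k = p·(1−p)^k`, and an even function `R` with `Σ_{k∈ℤ} (1−p)^{|k|}|R k| < ∞`,
the double convolution `Σ_{m≥0} Σ_{n≥0} h m · h n · R (t − m + n)` equals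
`Σ_{j=−∞}^{|t|} Σ_{k=j}^{∞} p² (1−p)^{|t|+k−2j} R k`; the right-hand side is
reindexed by `j = |t| − j'` (`j' : ℕ`) and `k = |t| − j' + k'` (`k' : ℕ`), so the
exponent `|t|+k−2j` becomes `j' + k'`. -/
theorem stmt16 (p : ℝ) (hp0 : 0 < p) (hp1 : p ≤ 1)
    (h : ℕ → ℝ) (hh : ∀ k, h k = p * (1 - p) ^ k)
    (R : ℤ → ℝ) (hReven : ∀ k : ℤ, R (-k) = R k)
    (hsum : Summable fun k : ℤ => (1 - p) ^ k.natAbs * |R k|) :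
    ∀ t : ℤ,
      ∑' m : ℕ, ∑' n : ℕ, h m * h n * R (t - (m : ℤ) + (n : ℤ)) =
      ∑' j' : ℕ, ∑' k' : ℕ,
        p ^ 2 * (1 - p) ^ (j' + k') * R ((t.natAbs : ℤ) - (j' : ℤ) + (k' : ℤ)) := by
  intro t
  have hq0 : 0 ≤ 1 - p := by linarith
  have hkernel : ∀ m n : ℕ, h m * h n = p ^ 2 * (1 - p) ^ (m + n) := by
    intro m n
    rw [hh, hh, pow_add]
    ring
  have hconv : Summable fun x : ℕ × ℕ => h x.1 * h x.2 * R (t.natAbs - x.1 + x.2) := by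
    refine Summable.of_norm <|
      ((summable_pow_add_mul_abs_sub_add hq0 (by linarith) hsum t.natAbs).mul_left (p ^ 2)).congr
        fun x => ?_
    rw [hkernel, norm_mul, Real.norm_of_nonneg (by positivity), Real.norm_eq_abs, mul_assoc]
  simp only [← hkernel]
  change doubleConv h R t = doubleConv h R t.natAbs
  rcases Int.natAbs_eq t with ht | ht
  · rw [← ht]
  · rw [ht, Int.natAbs_neg, Int.natAbs_natCast, doubleConv_neg hReven hconv]
end

section
/- Let F be a field equipped with a star operation, N ≥ 1, let G be an N×N matrix over F with zero diagonal such that I − G is invertible, and let D be a diagonal matrix with nonzero diagonal entries. Then the matrix Φ = (I − G)⁻¹ · D · ((I − G)ᴴ)⁻¹ is invertible with inverse Φ⁻¹ = (I − G)ᴴ · D⁻¹ · (I − G), and consequently for all i ≠ j, (Φ⁻¹) i j ≠ 0 implies that i and j are kins with respect to G (G i j ≠ 0, or G j i ≠ 0, or there exists k with G k i ≠ 0 and G k j ≠ 0). (This is Corollary 1: the power spectral density of the output y = (I−𝒢)⁻¹ e of a dynamic influence model with diagonal noise spectrum has an inverse whose nonzero off-diagonal entries occur only at kin pairs.) -/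
open Matrix

/-- Corollary 1: for a dynamic influence model matrix `G` with zero
diagonal and invertible `I − G`, and a diagonal noise spectrum `D` with nonzero
entries, the output power spectral density `Φ = (I−G)⁻¹·D·((I−G)ᴴ)⁻¹` is invertible
with `Φ⁻¹ = (I−G)ᴴ·D⁻¹·(I−G)`, and its nonzero off-diagonal entries occur only at
kin pairs. -/
theorem stmt17 {F : Type*} [Field F] [StarRing F] (N : ℕ) (hN : 1 ≤ N)
    (G : Matrix (Fin N) (Fin N) F) (hG : ∀ i, G i i = 0)
    (hIG : IsUnit (1 - G).det)
    (d : Fin N → F) (hd : ∀ i, d i ≠ 0)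
    (D : Matrix (Fin N) (Fin N) F) (hD : D = Matrix.diagonal d)
    (Φ : Matrix (Fin N) (Fin N) F)
    (hΦ : Φ = (1 - G)⁻¹ * D * ((1 - G)ᴴ)⁻¹) :
    IsUnit Φ.det ∧ Φ⁻¹ = (1 - G)ᴴ * D⁻¹ * (1 - G) ∧
      ∀ i j : Fin N, i ≠ j → Φ⁻¹ i j ≠ 0 →
        (G i j ≠ 0 ∨ G j i ≠ 0 ∨ ∃ k, G k i ≠ 0 ∧ G k j ≠ 0) := by
  set A := 1 - G with hA
  have hAH : IsUnit Aᴴ.det := by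
    rw [Matrix.det_conjTranspose]
    exact hIG.star
  have hDdet : IsUnit D.det := by
    rw [hD, Matrix.det_diagonal]
    exact (Finset.prod_ne_zero_iff.2 fun i _ => hd i).isUnit
  have key : Φ * (Aᴴ * D⁻¹ * A) = 1 := by
    rw [hΦ]
    calc (A⁻¹ * D * (Aᴴ)⁻¹) * (Aᴴ * D⁻¹ * A)
        = A⁻¹ * D * ((Aᴴ)⁻¹ * Aᴴ) * D⁻¹ * A := by noncomm_ring
      _ = A⁻¹ * (D * D⁻¹) * A := by
          rw [Matrix.nonsing_inv_mul _ hAH]; noncomm_ring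
      _ = A⁻¹ * A := by rw [Matrix.mul_nonsing_inv _ hDdet]; noncomm_ring
      _ = 1 := Matrix.nonsing_inv_mul _ hIG
  have hΦdet : IsUnit Φ.det := by
    have : IsUnit (Φ.det * (Aᴴ * D⁻¹ * A).det) := by
      rw [← Matrix.det_mul, key, Matrix.det_one]; exact isUnit_one
    exact isUnit_of_mul_isUnit_left this
  have hinv : Φ⁻¹ = Aᴴ * D⁻¹ * A := Matrix.inv_eq_right_inv key
  refine ⟨hΦdet, hinv, fun i j hij hne => ?_⟩
  rw [hinv, hD, Matrix.inv_diagonal] at hne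
  have hentry : (Aᴴ * Matrix.diagonal (Ring.inverse d) * A) i j
      = ∑ k, star (A k i) * Ring.inverse d k * A k j := by
    rw [Matrix.mul_apply]
    congr 1; ext k
    rw [Matrix.mul_diagonal]
    rw [Matrix.conjTranspose_apply]
  rw [hentry] at hne
  obtain ⟨k, -, hk⟩ := Finset.exists_ne_zero_of_sum_ne_zero hne
  have hki : A k i ≠ 0 := by
    intro h; apply hk; rw [h, star_zero, zero_mul, zero_mul]
  have hkj : A k j ≠ 0 := by
    intro h; apply hk; rw [h, mul_zero]
  have hAoff : ∀ a b : Fin N, a ≠ b → A a b = -G a b := by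
    intro a b hab
    simp [hA, Matrix.sub_apply, Matrix.one_apply_ne hab]
  by_cases hki' : k = i
  · subst hki'
    left
    intro h; apply hkj
    rw [hAoff k j hij, h, neg_zero]
  · by_cases hkj' : k = j
    · subst hkj'
      right; left
      intro h; apply hki
      rw [hAoff k i (Ne.symm hij), h, neg_zero]
    · right; right
      refine ⟨k, ?_, ?_⟩
      · intro h; apply hki; rw [hAoff k i hki', h, neg_zero]
      · intro h; apply hkj; rw [hAoff k j hkj', h, neg_zero]
end
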